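/- arXiv:2508.10697 — 8 statements merged into one kernel-verified Lean document; each statement's English description precedes it below -/
import Mathlib

section
/- Let γ ∈ (0,1] and let p ≥ 4 be a real number. Then for all real numbers x, y ≥ 0 one has ( −x^p − y^p + (p/2)·x^{p−2}·y^2 + (p/2)·y^{p−2}·x^2 ) · |x − y|^γ ≤ −(1/2)·x^{p+γ} − (1/2)·y^{p+γ} + x^p·y^γ + y^p·x^γ + p^{1+γ/2}·( x^{p−2+γ}·y^2 + y^{p−2+γ}·x^2 ). -/
open Real

private lemma rpow_subadd {a b γ : ℝ} (ha : 0 ≤ a) (hb : 0 ≤ b) (hγ0 : 0 ≤ γ) (hγ1 : γ ≤ 1) :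
    (a + b) ^ γ ≤ a ^ γ + b ^ γ := by
  have h := NNReal.rpow_add_le_add_rpow a.toNNReal b.toNNReal hγ0 hγ1
  have h2 := NNReal.coe_le_coe.2 h
  push_cast [NNReal.coe_rpow, ← Real.toNNReal_add ha hb,
    Real.coe_toNNReal _ (by positivity : (0:ℝ) ≤ a + b),
    Real.coe_toNNReal a ha, Real.coe_toNNReal b hb] at h2
  exact h2

private lemma two_rpow_ge {p : ℝ} (hp : 4 ≤ p) : p ≤ (2:ℝ) ^ (p - 2) := by
  have hlog : (1/2 : ℝ) ≤ Real.log 2 := by linarith [Real.log_two_gt_d9]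
  have h1 : (2:ℝ) ^ (p - 4) = Real.exp (Real.log 2 * (p - 4)) := by
    rw [Real.rpow_def_of_pos (by norm_num)]
  have h2 : 1 + Real.log 2 * (p - 4) ≤ (2:ℝ) ^ (p - 4) := by
    rw [h1]; linarith [Real.add_one_le_exp (Real.log 2 * (p - 4))]
  have h3 : (p - 4) / 2 ≤ Real.log 2 * (p - 4) := by nlinarith
  have h20 : (2:ℝ) ^ ((2:ℕ):ℝ) = 4 := by rw [Real.rpow_natCast]; norm_num
  have h4 : (2:ℝ) ^ (p - 2) = 4 * (2:ℝ) ^ (p - 4) := by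
    calc (2:ℝ) ^ (p - 2) = (2:ℝ) ^ (((2:ℕ):ℝ) + (p - 4)) := by congr 1; push_cast; ring
    _ = (2:ℝ) ^ ((2:ℕ):ℝ) * (2:ℝ) ^ (p - 4) := Real.rpow_add (by norm_num) _ _
    _ = 4 * (2:ℝ) ^ (p - 4) := by rw [h20]
  linarith

set_option maxHeartbeats 1000000 in
private lemma povzner_aux (γ p : ℝ) (hγ0 : 0 < γ) (hγ1 : γ ≤ 1) (hp : 4 ≤ p)
    (x y : ℝ) (hx : 0 ≤ x) (hy : 0 ≤ y) (hxy : y ≤ x) :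
    (-x ^ p - y ^ p + (p / 2) * x ^ (p - 2) * y ^ (2 : ℕ)
        + (p / 2) * y ^ (p - 2) * x ^ (2 : ℕ)) * |x - y| ^ γ
      ≤ -(1 / 2) * x ^ (p + γ) - (1 / 2) * y ^ (p + γ) + x ^ p * y ^ γ + y ^ p * x ^ γ
        + p ^ (1 + γ / 2) * (x ^ (p - 2 + γ) * y ^ (2 : ℕ) + y ^ (p - 2 + γ) * x ^ (2 : ℕ)) := by
  have habs : |x - y| = x - y := abs_of_nonneg (by linarith)
  rw [habs]
  set a := x ^ γ with ha
  set b := y ^ γ with hb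
  set u := x ^ p with hu
  set v := y ^ p with hv
  set c := x ^ (p - 2) with hc
  set d := y ^ (p - 2) with hd
  set K := p ^ (1 + γ / 2) with hKdef
  have ha0 : 0 ≤ a := Real.rpow_nonneg hx γ
  have hb0 : 0 ≤ b := Real.rpow_nonneg hy γ
  have hu0 : 0 ≤ u := Real.rpow_nonneg hx p
  have hv0 : 0 ≤ v := Real.rpow_nonneg hy p
  have hc0 : 0 ≤ c := Real.rpow_nonneg hx _
  have hd0 : 0 ≤ d := Real.rpow_nonneg hy _
  have hX0 : (0:ℝ) ≤ x ^ (2:ℕ) := by positivity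
  have hY0 : (0:ℝ) ≤ y ^ (2:ℕ) := by positivity
  have hab : b ≤ a := Real.rpow_le_rpow hy hxy hγ0.le
  -- identities
  have hxg : x ^ (p + γ) = u * a := Real.rpow_add_of_nonneg hx (by linarith) hγ0.le
  have hyg : y ^ (p + γ) = v * b := Real.rpow_add_of_nonneg hy (by linarith) hγ0.le
  have hxpg : x ^ (p - 2 + γ) = c * a := Real.rpow_add_of_nonneg hx (by linarith) hγ0.le
  have hypg : y ^ (p - 2 + γ) = d * b := Real.rpow_add_of_nonneg hy (by linarith) hγ0.le
  have hx2 : (x:ℝ) ^ (2:ℕ) = x ^ ((2:ℕ):ℝ) := (Real.rpow_natCast x 2).symm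
  have hy2 : (y:ℝ) ^ (2:ℕ) = y ^ ((2:ℕ):ℝ) := (Real.rpow_natCast y 2).symm
  have hux : u = c * x ^ (2:ℕ) := by
    rw [hx2, hu, hc, ← Real.rpow_add_of_nonneg hx (by linarith) (by norm_num)]
    congr 1
    push_cast; ring
  -- bounds on (x-y)^γ
  have h1 : (x - y) ^ γ ≤ a := Real.rpow_le_rpow (by linarith) (by linarith) hγ0.le
  have h2 : a - b ≤ (x - y) ^ γ := by
    have h := rpow_subadd (a := x - y) (b := y) (by linarith) hy hγ0.le hγ1
    rw [show x - y + y = x by ring] at h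
    simp only [← ha, ← hb] at h
    linarith
  -- K bound
  have hK : p ≤ K := by
    calc p = p ^ (1:ℝ) := (Real.rpow_one p).symm
    _ ≤ K := Real.rpow_le_rpow_of_exponent_le (by linarith) (by linarith)
  -- key inequality
  have hkey : (p / 2) * (d * x ^ (2:ℕ) * a) ≤ (1/2) * (u * a) + p * (d * x ^ (2:ℕ) * b) := by
    rcases le_or_gt a (2 * b) with hca | hca
    · have e1 : (0:ℝ) ≤ p / 2 * d * x ^ (2:ℕ) :=
        mul_nonneg (mul_nonneg (by linarith) hd0) hX0
      have e2 := mul_le_mul_of_nonneg_left hca e1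
      have e3 : (0:ℝ) ≤ u * a := mul_nonneg hu0 ha0
      linarith [e2, e3]
    · have h2y : 2 * y ≤ x := by
        by_contra hcon
        push_neg at hcon
        have e1 : x ^ γ ≤ (2*y) ^ γ := Real.rpow_le_rpow hx hcon.le hγ0.le
        have e2 : (2*y:ℝ) ^ γ = 2 ^ γ * b := by rw [Real.mul_rpow (by norm_num) hy, hb]
        have e3 : (2:ℝ) ^ γ ≤ 2 := by
          calc (2:ℝ) ^ γ ≤ 2 ^ (1:ℝ) := Real.rpow_le_rpow_of_exponent_le one_le_two hγ1
          _ = 2 := Real.rpow_one 2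
        have e4 : (2:ℝ) ^ γ * b ≤ 2 * b := mul_le_mul_of_nonneg_right e3 hb0
        rw [e2] at e1
        rw [ha] at hca
        linarith
      have hd_le : (2:ℝ) ^ (p - 2) * d ≤ c := by
        have h1' := Real.rpow_le_rpow (by positivity : (0:ℝ) ≤ 2 * y) h2y
          (by linarith : (0:ℝ) ≤ p - 2)
        rwa [Real.mul_rpow (by norm_num) hy, ← hd, ← hc] at h1'
      have h2p : p ≤ (2:ℝ) ^ (p - 2) := two_rpow_ge hp
      have hpd : p * d ≤ c := by
        have := mul_le_mul_of_nonneg_right h2p hd0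
        linarith
      have hXa : (0:ℝ) ≤ x ^ (2:ℕ) * a := mul_nonneg hX0 ha0
      have step : (p / 2) * (d * x ^ (2:ℕ) * a) ≤ (1/2) * (u * a) := by
        rw [hux]
        linarith [mul_le_mul_of_nonneg_right hpd hXa]
      have hdb : 0 ≤ p * (d * x ^ (2:ℕ) * b) :=
        mul_nonneg (by linarith) (mul_nonneg (mul_nonneg hd0 hX0) hb0)
      linarith
  -- assemble
  have hN : -u - v ≤ 0 := by linarith
  have hP0 : 0 ≤ (p / 2) * c * y ^ (2:ℕ) + (p / 2) * d * x ^ (2:ℕ) := by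
    have : (0:ℝ) ≤ p / 2 := by linarith
    positivity
  have t1 : (-u - v) * (x - y) ^ γ ≤ (-u - v) * (a - b) :=
    mul_le_mul_of_nonpos_left h2 hN
  have t2 : ((p / 2) * c * y ^ (2:ℕ) + (p / 2) * d * x ^ (2:ℕ)) * (x - y) ^ γ
      ≤ ((p / 2) * c * y ^ (2:ℕ) + (p / 2) * d * x ^ (2:ℕ)) * a :=
    mul_le_mul_of_nonneg_left h1 hP0
  rw [hxg, hyg, hxpg, hypg]
  have hvb : v * b ≤ v * a := mul_le_mul_of_nonneg_left hab hv0
  have hKc : (0:ℝ) ≤ (K - p) * (d * x ^ (2:ℕ) * b) :=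
    mul_nonneg (by linarith) (mul_nonneg (mul_nonneg hd0 hX0) hb0)
  have hKc2 : (0:ℝ) ≤ (K - p/2) * (c * a * y ^ (2:ℕ)) :=
    mul_nonneg (by linarith) (mul_nonneg (mul_nonneg hc0 ha0) hY0)
  have hva : 0 ≤ v * a := mul_nonneg hv0 ha0
  linarith [t1, t2, hkey, hvb, hKc, hKc2, hva]

/-- Sharpened Povzner-type inequality (Lemma 2.3 of the paper). -/
theorem povzner_sharp (γ p : ℝ) (hγ0 : 0 < γ) (hγ1 : γ ≤ 1) (hp : 4 ≤ p)
    (x y : ℝ) (hx : 0 ≤ x) (hy : 0 ≤ y) :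
    (-x ^ p - y ^ p + (p / 2) * x ^ (p - 2) * y ^ (2 : ℕ)
        + (p / 2) * y ^ (p - 2) * x ^ (2 : ℕ)) * |x - y| ^ γ
      ≤ -(1 / 2) * x ^ (p + γ) - (1 / 2) * y ^ (p + γ) + x ^ p * y ^ γ + y ^ p * x ^ γ
        + p ^ (1 + γ / 2) * (x ^ (p - 2 + γ) * y ^ (2 : ℕ) + y ^ (p - 2 + γ) * x ^ (2 : ℕ)) := by
  rcases le_total y x with hxy | hxy
  · exact povzner_aux γ p hγ0 hγ1 hp x y hx hy hxy
  · have h := povzner_aux γ p hγ0 hγ1 hp y x hy hx hxy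
    rw [abs_sub_comm] at h
    linarith
end

section
/- Let γ ∈ (0,1] and let p ≥ 4 be a real number, and set ε = 1/√(2p). Then for all real numbers x, y ≥ 0 with x ≤ ε·y one has −x^{p+γ} − y^{p+γ} + (p/2)·( x^{p−2}·y^{2+γ} + y^{p−2}·x^{2+γ} ) ≤ −x^{p+γ} − (1/2)·y^{p+γ}. -/
/-- Small-ratio case in the proof of the sharpened Povzner-type inequality:
with `ε = 1/√(2p)`, if `x ≤ ε·y` then the cross terms are absorbed. -/
theorem povzner_small_ratio (γ p : ℝ) (hγ0 : 0 < γ) (hγ1 : γ ≤ 1) (hp : 4 ≤ p)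
    (x y : ℝ) (hx : 0 ≤ x) (hy : 0 ≤ y)
    (hxy : x ≤ (1 / Real.sqrt (2 * p)) * y) :
    -x ^ (p + γ) - y ^ (p + γ)
        + (p / 2) * (x ^ (p - 2) * y ^ (2 + γ) + y ^ (p - 2) * x ^ (2 + γ))
      ≤ -x ^ (p + γ) - (1 / 2) * y ^ (p + γ) := by
  set ε : ℝ := 1 / Real.sqrt (2 * p) with hεdef
  have hp0 : (0:ℝ) < 2 * p := by linarith
  have hs : 0 < Real.sqrt (2 * p) := Real.sqrt_pos.mpr hp0
  have hε0 : 0 < ε := by positivity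
  have hε1 : ε ≤ 1 := by
    rw [hεdef, div_le_one hs]
    have : (1:ℝ) ≤ Real.sqrt 1 := by simp
    calc (1:ℝ) = Real.sqrt 1 := by simp
    _ ≤ Real.sqrt (2 * p) := Real.sqrt_le_sqrt (by linarith)
  have hεsq : ε ^ (2:ℝ) = 1 / (2 * p) := by
    rw [Real.rpow_two, hεdef, div_pow, one_pow, Real.sq_sqrt hp0.le]
  rcases hy.eq_or_lt with h0 | hy0
  · have hx0 : x = 0 := le_antisymm (by rw [← h0] at hxy; simpa using hxy) hx
    subst hx0
    rw [← h0]
    rw [Real.zero_rpow (by linarith), Real.zero_rpow (by linarith),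
      Real.zero_rpow (by linarith)]
    norm_num
  · -- main case y > 0
    have hεy : 0 ≤ ε * y := by positivity
    have hA : x ^ (p - 2) * y ^ (2 + γ) ≤ ε ^ (p - 2) * y ^ (p + γ) := by
      have h1 : x ^ (p - 2) ≤ (ε * y) ^ (p - 2) :=
        Real.rpow_le_rpow hx hxy (by linarith)
      have h2 : (ε * y) ^ (p - 2) = ε ^ (p - 2) * y ^ (p - 2) :=
        Real.mul_rpow hε0.le hy
      have h3 : y ^ (p - 2) * y ^ (2 + γ) = y ^ (p + γ) := by
        rw [← Real.rpow_add hy0]; ring_nf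
      calc x ^ (p - 2) * y ^ (2 + γ) ≤ ε ^ (p - 2) * y ^ (p - 2) * y ^ (2 + γ) := by
            rw [← h2]
            exact mul_le_mul_of_nonneg_right h1 (Real.rpow_nonneg hy _)
        _ = ε ^ (p - 2) * y ^ (p + γ) := by rw [mul_assoc, h3]
    have hB : y ^ (p - 2) * x ^ (2 + γ) ≤ ε ^ (2 + γ) * y ^ (p + γ) := by
      have h1 : x ^ (2 + γ) ≤ (ε * y) ^ (2 + γ) :=
        Real.rpow_le_rpow hx hxy (by linarith)
      have h2 : (ε * y) ^ (2 + γ) = ε ^ (2 + γ) * y ^ (2 + γ) :=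
        Real.mul_rpow hε0.le hy
      have h3 : y ^ (p - 2) * y ^ (2 + γ) = y ^ (p + γ) := by
        rw [← Real.rpow_add hy0]; ring_nf
      calc y ^ (p - 2) * x ^ (2 + γ) ≤ y ^ (p - 2) * (ε ^ (2 + γ) * y ^ (2 + γ)) := by
            rw [← h2]
            exact mul_le_mul_of_nonneg_left h1 (Real.rpow_nonneg hy _)
        _ = ε ^ (2 + γ) * y ^ (p + γ) := by rw [← h3]; ring
    have hε2a : ε ^ (p - 2) ≤ ε ^ (2:ℝ) :=
      Real.rpow_le_rpow_of_exponent_ge hε0 hε1 (by linarith)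
    have hε2b : ε ^ (2 + γ) ≤ ε ^ (2:ℝ) :=
      Real.rpow_le_rpow_of_exponent_ge hε0 hε1 (by linarith)
    have hyp : 0 ≤ y ^ (p + γ) := Real.rpow_nonneg hy _
    have key : (p / 2) * (x ^ (p - 2) * y ^ (2 + γ) + y ^ (p - 2) * x ^ (2 + γ))
        ≤ (1 / 2) * y ^ (p + γ) := by
      have h4 : x ^ (p - 2) * y ^ (2 + γ) + y ^ (p - 2) * x ^ (2 + γ)
          ≤ (2 * ε ^ (2:ℝ)) * y ^ (p + γ) := by
        have := add_le_add hA hB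
        nlinarith [mul_le_mul_of_nonneg_right hε2a hyp,
          mul_le_mul_of_nonneg_right hε2b hyp]
      have h5 : (p / 2) * ((2 * ε ^ (2:ℝ)) * y ^ (p + γ)) = (1 / 2) * y ^ (p + γ) := by
        rw [hεsq]; field_simp
      calc (p / 2) * (x ^ (p - 2) * y ^ (2 + γ) + y ^ (p - 2) * x ^ (2 + γ))
          ≤ (p / 2) * ((2 * ε ^ (2:ℝ)) * y ^ (p + γ)) :=
            mul_le_mul_of_nonneg_left h4 (by linarith)
        _ = (1 / 2) * y ^ (p + γ) := h5
    linarith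
end

section
/- Let a, b, c > 0, α > 0 and β ∈ (0,1]. Let h : [0,∞) → [0,∞) be continuous on [0,∞), differentiable on (0,∞), and satisfy h'(t) ≤ −a·h(t)^{1+α} + b·h(t) + c·h(t)^{1−β} for all t > 0. Then for every t > 0, h(t) ≤ (2/(a·α·t))^{1/α} + (4b/a)^{1/α} + (4c/a)^{1/(α+β)}. -/
/-!
The function `ψ t = (2 / (a α t)) ^ (1 / α)` solves `ψ' = -(a / 2) ψ ^ (1 + α)` and blows up at
`t = 0`. Once `x ≥ M := (4 b / a) ^ (1 / α) + (4 c / a) ^ (1 / (α + β))`, each of the terms `b x` and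
`c x ^ (1 - β)` is at most `(a / 4) x ^ (1 + α)`, so the right-hand side of the inequality is at most
`-(a / 2) x ^ (1 + α)`. Hence `ψ + M` is an upper barrier: `h` lies below it close to `0`, because `h`
is continuous at `0` while `ψ → ∞`, and at a point where `h = ψ + M` we get `h' < ψ'`, so `h` can
never cross it.
-/

open Set Real Filter Topology

noncomputable def decayBarrier (a α t : ℝ) : ℝ := (2 / (a * α * t)) ^ (1 / α)

lemma hasDerivAt_decayBarrier {a α t : ℝ} (ha : 0 < a) (hα : 0 < α) (ht : 0 < t) :
    HasDerivAt (decayBarrier a α) (-(a / 2) * decayBarrier a α t ^ (1 + α)) t := by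
  set u := 2 / (a * α * t)
  have hu : 0 < u := by positivity
  have hdu : HasDerivAt (fun s => 2 / (a * α * s)) (-(a * α / 2) * u ^ 2) t := by
    simp only [div_mul_eq_div_div _ (a * α), div_eq_mul_inv (2 / (a * α))]
    exact ((hasDerivAt_inv ht.ne').const_mul _).congr_deriv (by simp only [u]; field_simp)
  refine (hdu.rpow_const (p := 1 / α) (Or.inl hu.ne')).congr_deriv ?_
  rw [show decayBarrier a α t = u ^ (1 / α) from rfl, ← rpow_mul hu.le,
    show 1 / α * (1 + α) = (1 / α - 1) + 2 by field_simp; ring, rpow_add hu, rpow_two]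
  simp only [u]
  field_simp

lemma tendsto_decayBarrier_nhdsGT_zero {a α : ℝ} (ha : 0 < a) (hα : 0 < α) :
    Tendsto (decayBarrier a α) (𝓝[>] 0) atTop := by
  refine (tendsto_rpow_atTop (one_div_pos.2 hα)).comp ?_
  convert tendsto_inv_nhdsGT_zero.const_mul_atTop (show 0 < 2 / (a * α) by positivity) using 2
  field_simp

lemma mul_rpow_le_rpow_add_of_rpow_one_div_le {d x p γ : ℝ} (hd : 0 ≤ d) (hγ : 0 < γ)
    (hx : 0 < x) (hdx : d ^ (1 / γ) ≤ x) : d * x ^ p ≤ x ^ (p + γ) := by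
  have hdγ : d ≤ x ^ γ := calc
    d = (d ^ γ⁻¹) ^ γ := (rpow_inv_rpow hd hγ.ne').symm
    _ ≤ x ^ γ := by rw [← one_div]; gcongr
  rw [rpow_add hx, mul_comm]
  gcongr

lemma absorb_lower_order_terms {a b c α β x : ℝ} (ha : 0 < a) (hb : 0 ≤ b) (hc : 0 ≤ c)
    (hα : 0 < α) (hαβ : 0 < α + β) (hx : 0 < x)
    (hM : (4 * b / a) ^ (1 / α) + (4 * c / a) ^ (1 / (α + β)) ≤ x) :
    -a * x ^ (1 + α) + b * x + c * x ^ (1 - β) ≤ -(a / 2) * x ^ (1 + α) := by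
  have hB : (4 * b / a) ^ (1 / α) ≤ x := by
    have : 0 ≤ (4 * c / a) ^ (1 / (α + β)) := by positivity
    linarith
  have hC : (4 * c / a) ^ (1 / (α + β)) ≤ x := by
    have : 0 ≤ (4 * b / a) ^ (1 / α) := by positivity
    linarith
  have hbx := mul_rpow_le_rpow_add_of_rpow_one_div_le (p := 1) (by positivity) hα hx hB
  have hcx := mul_rpow_le_rpow_add_of_rpow_one_div_le (p := 1 - β) (by positivity) hαβ hx hC
  rw [rpow_one] at hbx
  rw [show 1 - β + (α + β) = 1 + α by ring] at hcx
  have hb' : b * x = a / 4 * (4 * b / a * x) := by field_simp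
  have hc' : c * x ^ (1 - β) = a / 4 * (4 * c / a * x ^ (1 - β)) := by field_simp
  rw [hb', hc']
  nlinarith

lemma exists_mem_Ioo_le_of_tendsto_atTop {f g : ℝ → ℝ} {x₀ t : ℝ}
    (hf : ContinuousWithinAt f (Ici x₀) x₀) (hg : Tendsto g (𝓝[>] x₀) atTop) (ht : x₀ < t) :
    ∃ s ∈ Ioo x₀ t, f s ≤ g s := by
  have hf' : Tendsto f (𝓝[>] x₀) (𝓝 (f x₀)) :=
    hf.mono_left (nhdsWithin_mono _ Ioi_subset_Ici_self)
  have hfg : ∀ᶠ s in 𝓝[>] x₀, f s ≤ g s :=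
    (hf'.eventually (eventually_lt_nhds (lt_add_one _))).and (hg.eventually_ge_atTop _)
      |>.mono fun _ hs => hs.1.le.trans hs.2
  exact (Filter.Eventually.and (Ioo_mem_nhdsGT ht) hfg).exists

theorem ode_ineq_bound_general (a b c α β : ℝ) (ha : 0 < a) (hb : 0 < b) (hc : 0 < c)
    (hα : 0 < α) (hβ0 : 0 < β)
    (h : ℝ → ℝ)
    (hcont : ContinuousOn h (Set.Ici 0))
    (hdiff : ∀ t, 0 < t → DifferentiableAt ℝ h t)
    (hineq : ∀ t, 0 < t →
      deriv h t ≤ -a * h t ^ (1 + α) + b * h t + c * h t ^ (1 - β)) :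
    ∀ t, 0 < t →
      h t ≤ (2 / (a * α * t)) ^ (1 / α) + (4 * b / a) ^ (1 / α)
        + (4 * c / a) ^ (1 / (α + β)) := by
  intro t ht
  have hαβ : 0 < α + β := by linarith
  set ψ := decayBarrier a α
  set M := (4 * b / a) ^ (1 / α) + (4 * c / a) ^ (1 / (α + β))
  have hM : 0 < M := by positivity
  obtain ⟨s, ⟨hs, hst⟩, hhs⟩ := exists_mem_Ioo_le_of_tendsto_atTop (hcont 0 self_mem_Ici)
    (tendsto_decayBarrier_nhdsGT_zero ha hα) ht
  have hpos : ∀ x ∈ Icc s t, 0 < x := fun x hx => hs.trans_le hx.1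
  have hψ' : ∀ x ∈ Icc s t, HasDerivAt (fun y => ψ y + M) (-(a / 2) * ψ x ^ (1 + α)) x :=
    fun x hx => (hasDerivAt_decayBarrier ha hα (hpos x hx)).add_const M
  rw [add_assoc]
  refine image_le_of_deriv_right_lt_deriv_boundary' (hcont.mono fun x hx => hs.le.trans hx.1)
    (fun x hx => (hdiff x (hpos x (Ico_subset_Icc_self hx))).hasDerivAt.hasDerivWithinAt)
    (by linarith) (fun x hx => (hψ' x hx).continuousAt.continuousWithinAt)
    (fun x hx => (hψ' x (Ico_subset_Icc_self hx)).hasDerivWithinAt) ?_ ⟨hst.le, le_rfl⟩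
  intro x hx hhx
  have hx0 := hpos x (Ico_subset_Icc_self hx)
  have hψx : 0 < ψ x := by unfold ψ decayBarrier; positivity
  have hψh : ψ x < h x := by linarith
  calc deriv h x ≤ -a * h x ^ (1 + α) + b * h x + c * h x ^ (1 - β) := hineq x hx0
    _ ≤ -(a / 2) * h x ^ (1 + α) :=
      absorb_lower_order_terms ha hb.le hc.le hα hαβ (hψx.trans hψh) (by linarith)
    _ < -(a / 2) * ψ x ^ (1 + α) := by
      have := rpow_lt_rpow hψx.le hψh (by linarith : 0 < 1 + α)
      nlinarith

/-- A priori bound for the ordinary differential inequality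
`h' ≤ -a h^{1+α} + b h + c h^{1-β}`, independent of the initial value. -/
theorem ode_ineq_bound (a b c α β : ℝ) (ha : 0 < a) (hb : 0 < b) (hc : 0 < c)
    (hα : 0 < α) (hβ0 : 0 < β) (hβ1 : β ≤ 1)
    (h : ℝ → ℝ)
    (hnonneg : ∀ t, 0 ≤ t → 0 ≤ h t)
    (hcont : ContinuousOn h (Set.Ici 0))
    (hdiff : ∀ t, 0 < t → DifferentiableAt ℝ h t)
    (hineq : ∀ t, 0 < t →
      deriv h t ≤ -a * h t ^ (1 + α) + b * h t + c * h t ^ (1 - β)) :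
    ∀ t, 0 < t →
      h t ≤ (2 / (a * α * t)) ^ (1 / α) + (4 * b / a) ^ (1 / α)
        + (4 * c / a) ^ (1 / (α + β)) :=
  ode_ineq_bound_general a b c α β ha hb hc hα hβ0 h hcont hdiff hineq
end

section
/- Let γ ∈ (0,1] and r₀ > 0. There exists a constant C = C(r₀,γ) > 0, depending only on r₀ and γ, with the following property: for every real number p ≥ 4 and every function h : [0,∞) → [0,∞) that is continuous on [0,∞), differentiable on (0,∞), satisfies h(0) ≤ r₀^p, and satisfies for all t > 0 the differential inequality h'(t) ≤ −p·h(t)^{1 + γ/(p−2)} + 2p·r₀^γ·h(t) + 2r₀^2·p^{2+γ/2}·h(t)^{1 − (2−γ)/(p−2)}, one has sup_{t ∈ [0,∞)} h(t) ≤ C^p · p^{(2+γ)(p−2)/4}. -/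
lemma barrier_lemma {h : ℝ → ℝ} {M : ℝ}
    (hc : ContinuousOn h (Set.Ici 0))
    (hd : ∀ t, 0 < t → DifferentiableAt ℝ h t)
    (h0 : h 0 ≤ M)
    (hder : ∀ t, 0 < t → M ≤ h t → deriv h t ≤ 0) :
    ∀ t, 0 ≤ t → h t ≤ M := by
  intro t₁ ht₁
  by_contra hcon
  push_neg at hcon
  set S : Set ℝ := Set.Icc 0 t₁ ∩ h ⁻¹' Set.Iic M with hS
  have hScl : IsClosed S := by
    refine ContinuousOn.preimage_isClosed_of_isClosed
      (hc.mono ?_) isClosed_Icc isClosed_Iic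
    exact fun x hx => hx.1
  have h0S : (0 : ℝ) ∈ S := ⟨⟨le_refl 0, ht₁⟩, h0⟩
  have hSne : S.Nonempty := ⟨0, h0S⟩
  have hSbdd : BddAbove S := ⟨t₁, fun x hx => hx.1.2⟩
  set s := sSup S with hs
  have hsS : s ∈ S := hScl.csSup_mem hSne hSbdd
  have hs0 : 0 ≤ s := hsS.1.1
  have hst : s ≤ t₁ := hsS.1.2
  have hsM : h s ≤ M := hsS.2
  have hslt : s < t₁ := lt_of_le_of_ne hst (by
    intro he; rw [he] at hsM; exact absurd hsM (not_le.mpr hcon))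
  have hint : interior (Set.Icc s t₁) = Set.Ioo s t₁ := interior_Icc
  have habove : ∀ x ∈ Set.Ioo s t₁, M < h x := by
    intro x hx
    by_contra hxM
    push_neg at hxM
    have hxS : x ∈ S := ⟨⟨le_trans hs0 hx.1.le, hx.2.le⟩, hxM⟩
    exact absurd (le_csSup hSbdd hxS) (not_le.mpr hx.1)
  have hanti : AntitoneOn h (Set.Icc s t₁) := by
    apply antitoneOn_of_deriv_nonpos (convex_Icc s t₁)
    · exact hc.mono (fun x hx => le_trans hs0 hx.1)
    · rw [hint]
      exact fun x hx => (hd x (lt_of_le_of_lt hs0 hx.1)).differentiableWithinAt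
    · rw [hint]
      exact fun x hx => hder x (lt_of_le_of_lt hs0 hx.1) (habove x hx).le
  have := hanti (Set.left_mem_Icc.mpr hslt.le) (Set.right_mem_Icc.mpr hslt.le) hslt.le
  linarith

lemma key_algebra (γ r₀ p x : ℝ) (hγ0 : 0 < γ) (hγ1 : γ ≤ 1) (hr₀ : 0 < r₀)
    (hp : 4 ≤ p)
    (hx : (4 ^ (1/γ) * (1 + r₀)) ^ p * p ^ ((2 + γ) * (p - 2) / 4) ≤ x) :
    -p * x ^ (1 + γ / (p - 2)) + 2 * p * r₀ ^ γ * x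
      + 2 * r₀ ^ (2 : ℕ) * p ^ (2 + γ / 2) * x ^ (1 - (2 - γ) / (p - 2)) ≤ 0 := by
  have hp0 : (0:ℝ) < p := by linarith
  have hp2 : (0:ℝ) < p - 2 := by linarith
  have hC0 : (0:ℝ) < 4 ^ (1/γ) * (1 + r₀) := by positivity
  have h41 : (1:ℝ) ≤ 4 ^ (1/γ) := Real.one_le_rpow (by norm_num) (by positivity)
  have hr1 : (1:ℝ) ≤ 1 + r₀ := by linarith
  have hC1 : (1:ℝ) ≤ 4 ^ (1/γ) * (1 + r₀) := by nlinarith [h41, hr1]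
  set C := (4:ℝ) ^ (1/γ) * (1 + r₀) with hC
  set E := (2 + γ) * (p - 2) / 4 with hE
  have hE0 : 0 ≤ E := by positivity
  have hpE1 : (1:ℝ) ≤ p ^ E := Real.one_le_rpow (by linarith) hE0
  set M := C ^ p * p ^ E with hM
  have hM0 : (0:ℝ) < M := by positivity
  have hx0 : (0:ℝ) < x := lt_of_lt_of_le hM0 hx
  -- generic lemma: M ^ e ≥ 4^(p*e/γ) * (1+r₀)^(p*e)
  have hMe : ∀ e : ℝ, 0 ≤ e → (4:ℝ) ^ (p * e / γ) * (1 + r₀) ^ (p * e) ≤ M ^ e := by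
    intro e he
    have h1 : M ^ e = C ^ (p * e) * (p ^ E) ^ e := by
      rw [hM, Real.mul_rpow (by positivity) (by positivity), ← Real.rpow_mul (le_of_lt hC0)]
    have h2 : C ^ (p * e) = (4:ℝ) ^ (p * e / γ) * (1 + r₀) ^ (p * e) := by
      rw [hC, Real.mul_rpow (by positivity) (by positivity), ← Real.rpow_mul (by norm_num)]
      ring_nf
    have h3 : (1:ℝ) ≤ (p ^ E) ^ e := Real.one_le_rpow hpE1 he
    calc (4:ℝ) ^ (p * e / γ) * (1 + r₀) ^ (p * e)
        = C ^ (p * e) * 1 := by rw [h2, mul_one]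
      _ ≤ C ^ (p * e) * (p ^ E) ^ e := by
          apply mul_le_mul_of_nonneg_left h3 (by positivity)
      _ = M ^ e := h1.symm
  -- Step A : 4 * r₀ ^ γ ≤ x ^ (γ / (p-2))
  have hxa : ∀ e : ℝ, 0 ≤ e → M ^ e ≤ x ^ e := fun e he =>
    Real.rpow_le_rpow hM0.le hx he
  have stepA : 4 * r₀ ^ γ ≤ x ^ (γ / (p - 2)) := by
    have ha0 : 0 ≤ γ / (p - 2) := by positivity
    refine le_trans ?_ (le_trans (hMe _ ha0) (hxa _ ha0))
    have e1 : (1:ℝ) ≤ p * (γ / (p - 2)) / γ := by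
      have hq : p * (γ / (p - 2)) / γ = p * γ / ((p - 2) * γ) := by
        field_simp
      rw [hq, le_div_iff₀ (by positivity)]
      nlinarith
    have e2 : γ ≤ p * (γ / (p - 2)) := by
      have hq : p * (γ / (p - 2)) = p * γ / (p - 2) := by ring
      rw [hq, le_div_iff₀ hp2]
      nlinarith
    have t1 : (4:ℝ) ≤ 4 ^ (p * (γ / (p - 2)) / γ) := by
      calc (4:ℝ) = 4 ^ (1:ℝ) := (Real.rpow_one 4).symm
        _ ≤ _ := Real.rpow_le_rpow_of_exponent_le (by norm_num) e1
    have t2 : r₀ ^ γ ≤ (1 + r₀) ^ (p * (γ / (p - 2))) := by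
      calc r₀ ^ γ ≤ (1 + r₀) ^ γ := Real.rpow_le_rpow hr₀.le (by linarith) hγ0.le
        _ ≤ _ := Real.rpow_le_rpow_of_exponent_le hr1 e2
    calc 4 * r₀ ^ γ ≤ 4 ^ (p * (γ / (p - 2)) / γ) * (1 + r₀) ^ (p * (γ / (p - 2))) :=
          mul_le_mul t1 t2 (by positivity) (by positivity)
      _ = _ := rfl
  -- Step B : 4 * r₀ ^ 2 * p ^ (1 + γ/2) ≤ x ^ (2 / (p-2))
  have stepB : 4 * r₀ ^ (2:ℕ) * p ^ ((1:ℝ) + γ / 2) ≤ x ^ (2 / (p - 2)) := by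
    have hb0 : 0 ≤ 2 / (p - 2) := by positivity
    have hEe : E * (2 / (p - 2)) = 1 + γ / 2 := by
      rw [hE]; field_simp; ring
    have hMb : M ^ (2 / (p - 2)) = C ^ (p * (2 / (p - 2))) * p ^ ((1:ℝ) + γ / 2) := by
      rw [hM, Real.mul_rpow (by positivity) (by positivity),
        ← Real.rpow_mul (le_of_lt hC0), ← Real.rpow_mul hp0.le, hEe]
    have e1 : (1:ℝ) ≤ p * (2 / (p - 2)) / γ := by
      have hq : p * (2 / (p - 2)) / γ = p * 2 / ((p - 2) * γ) := by
        field_simp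
      rw [hq, le_div_iff₀ (by positivity)]
      nlinarith
    have e2 : (2:ℝ) ≤ p * (2 / (p - 2)) := by
      have hq : p * (2 / (p - 2)) = p * 2 / (p - 2) := by ring
      rw [hq, le_div_iff₀ hp2]
      nlinarith
    have hCb : 4 * r₀ ^ (2:ℕ) ≤ C ^ (p * (2 / (p - 2))) := by
      have h2 : C ^ (p * (2 / (p - 2))) =
          (4:ℝ) ^ (p * (2 / (p - 2)) / γ) * (1 + r₀) ^ (p * (2 / (p - 2))) := by
        rw [hC, Real.mul_rpow (by positivity) (by positivity), ← Real.rpow_mul (by norm_num)]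
        ring_nf
      rw [h2]
      have t1 : (4:ℝ) ≤ 4 ^ (p * (2 / (p - 2)) / γ) := by
        calc (4:ℝ) = 4 ^ (1:ℝ) := (Real.rpow_one 4).symm
          _ ≤ _ := Real.rpow_le_rpow_of_exponent_le (by norm_num) e1
      have t2 : r₀ ^ (2:ℕ) ≤ (1 + r₀) ^ (p * (2 / (p - 2))) := by
        calc r₀ ^ (2:ℕ) = r₀ ^ ((2:ℕ):ℝ) := (Real.rpow_natCast r₀ 2).symm
          _ ≤ (1 + r₀) ^ ((2:ℕ):ℝ) := Real.rpow_le_rpow hr₀.le (by linarith) (by norm_num)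
          _ ≤ _ := Real.rpow_le_rpow_of_exponent_le hr1 (by push_cast; exact e2)
      exact mul_le_mul t1 t2 (by positivity) (by positivity)
    calc 4 * r₀ ^ (2:ℕ) * p ^ ((1:ℝ) + γ / 2)
        ≤ C ^ (p * (2 / (p - 2))) * p ^ ((1:ℝ) + γ / 2) := by
          apply mul_le_mul_of_nonneg_right hCb (by positivity)
      _ = M ^ (2 / (p - 2)) := hMb.symm
      _ ≤ x ^ (2 / (p - 2)) := hxa _ hb0
  -- combine
  have split1 : x ^ (1 + γ / (p - 2)) = x * x ^ (γ / (p - 2)) := by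
    rw [Real.rpow_add hx0, Real.rpow_one]
  have split2 : x ^ (1 + γ / (p - 2)) = x ^ (1 - (2 - γ) / (p - 2)) * x ^ (2 / (p - 2)) := by
    rw [← Real.rpow_add hx0]
    congr 1
    field_simp
    ring
  have term1 : 2 * p * r₀ ^ γ * x ≤ (p / 2) * x ^ (1 + γ / (p - 2)) := by
    calc 2 * p * r₀ ^ γ * x = (p / 2 * x) * (4 * r₀ ^ γ) := by ring
      _ ≤ (p / 2 * x) * x ^ (γ / (p - 2)) :=
          mul_le_mul_of_nonneg_left stepA (by positivity)
      _ = (p / 2) * (x * x ^ (γ / (p - 2))) := by ring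
      _ = (p / 2) * x ^ (1 + γ / (p - 2)) := by rw [← split1]
  have term2 : 2 * r₀ ^ (2:ℕ) * p ^ (2 + γ / 2) * x ^ (1 - (2 - γ) / (p - 2))
      ≤ (p / 2) * x ^ (1 + γ / (p - 2)) := by
    have hpp : p ^ (2 + γ / 2) = p * p ^ ((1:ℝ) + γ / 2) := by
      rw [show (2:ℝ) + γ / 2 = 1 + (1 + γ / 2) by ring, Real.rpow_add hp0, Real.rpow_one]
    calc 2 * r₀ ^ (2:ℕ) * p ^ (2 + γ / 2) * x ^ (1 - (2 - γ) / (p - 2))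
        = (p / 2 * x ^ (1 - (2 - γ) / (p - 2))) * (4 * r₀ ^ (2:ℕ) * p ^ ((1:ℝ) + γ / 2)) := by
          rw [hpp]; ring
      _ ≤ (p / 2 * x ^ (1 - (2 - γ) / (p - 2))) * x ^ (2 / (p - 2)) :=
          mul_le_mul_of_nonneg_left stepB (by positivity)
      _ = (p / 2) * (x ^ (1 - (2 - γ) / (p - 2)) * x ^ (2 / (p - 2))) := by ring
      _ = (p / 2) * x ^ (1 + γ / (p - 2)) := by rw [← split2]
  linarith [term1, term2]


/-- Uniform-in-time polynomial moment bound with almost sharp dependence on `p`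
(Proposition 2.1 of the paper, in its abstract differential-inequality form). -/
theorem uniform_polynomial_moment_bound (γ r₀ : ℝ) (hγ0 : 0 < γ) (hγ1 : γ ≤ 1)
    (hr₀ : 0 < r₀) :
    ∃ C : ℝ, 0 < C ∧ ∀ p : ℝ, 4 ≤ p → ∀ h : ℝ → ℝ,
      (∀ t, 0 ≤ t → 0 ≤ h t) →
      ContinuousOn h (Set.Ici 0) →
      (∀ t, 0 < t → DifferentiableAt ℝ h t) →
      h 0 ≤ r₀ ^ p →
      (∀ t, 0 < t →
        deriv h t ≤ -p * h t ^ (1 + γ / (p - 2)) + 2 * p * r₀ ^ γ * h t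
          + 2 * r₀ ^ (2 : ℕ) * p ^ (2 + γ / 2) * h t ^ (1 - (2 - γ) / (p - 2))) →
      ∀ t, 0 ≤ t → h t ≤ C ^ p * p ^ ((2 + γ) * (p - 2) / 4) := by
  refine ⟨4 ^ (1/γ) * (1 + r₀), by positivity, ?_⟩
  intro p hp h hpos hc hd h0 hineq
  set C := (4:ℝ) ^ (1/γ) * (1 + r₀) with hC
  set M := C ^ p * p ^ ((2 + γ) * (p - 2) / 4) with hM
  have hp0 : (0:ℝ) < p := by linarith
  have h41 : (1:ℝ) ≤ 4 ^ (1/γ) := Real.one_le_rpow (by norm_num) (by positivity)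
  have hr1 : (1:ℝ) ≤ 1 + r₀ := by linarith
  have hE0 : 0 ≤ (2 + γ) * (p - 2) / 4 := by nlinarith
  have hpE1 : (1:ℝ) ≤ p ^ ((2 + γ) * (p - 2) / 4) := Real.one_le_rpow (by linarith) hE0
  have h0M : h 0 ≤ M := by
    refine le_trans h0 ?_
    have h1 : r₀ ^ p ≤ (1 + r₀) ^ p := Real.rpow_le_rpow hr₀.le (by linarith) hp0.le
    have h2 : (1 + r₀) ^ p ≤ C ^ p := Real.rpow_le_rpow (by linarith) (by
      rw [hC]; nlinarith [Real.rpow_pos_of_pos (show (0:ℝ) < 4 by norm_num) (1/γ)]) hp0.le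
    have h3 : C ^ p ≤ M := by
      rw [hM]
      nlinarith [Real.rpow_pos_of_pos (show (0:ℝ) < C by positivity) p]
    linarith
  apply barrier_lemma hc hd h0M
  intro t ht hMt
  have := hineq t ht
  have hkey := key_algebra γ r₀ p (h t) hγ0 hγ1 hr₀ hp (by rw [hM, hC] at hMt; exact hMt)
  linarith
end

section
/- Let γ ∈ (0,1] and let μ be a Borel probability measure on ℝ³ (with the Euclidean norm ‖·‖). Suppose there is a constant C > 0 such that for every integer n ≥ 3, ∫_{ℝ³} ‖v‖^{4n/(2+γ)} dμ(v) ≤ C^{4n/(2+γ)} · (4n/(2+γ))^{n − (2+γ)/2}. Then for every ξ with 0 < ξ < (2+γ)/(4e·C^{4/(2+γ)}), the exponential moment ∫_{ℝ³} exp( ξ·‖v‖^{4/(2+γ)} ) dμ(v) is finite. -/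
open MeasureTheory

set_option maxHeartbeats 1600000 in
/-- From uniform polynomial moment bounds of order `4n/(2+γ)` to a finite
stretched-exponential moment of order `4/(2+γ)`. -/
theorem exponential_moment_from_polynomial (γ : ℝ) (hγ0 : 0 < γ) (hγ1 : γ ≤ 1)
    (μ : Measure (EuclideanSpace ℝ (Fin 3))) [IsProbabilityMeasure μ]
    (C : ℝ) (hC : 0 < C)
    (hmom : ∀ n : ℕ, 3 ≤ n →
      ∫⁻ v, ENNReal.ofReal (‖v‖ ^ (4 * (n : ℝ) / (2 + γ))) ∂μ
        ≤ ENNReal.ofReal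
            (C ^ (4 * (n : ℝ) / (2 + γ))
              * (4 * (n : ℝ) / (2 + γ)) ^ ((n : ℝ) - (2 + γ) / 2)))
    (ξ : ℝ) (hξ0 : 0 < ξ)
    (hξ : ξ < (2 + γ) / (4 * Real.exp 1 * C ^ (4 / (2 + γ)))) :
    ∫⁻ v, ENNReal.ofReal (Real.exp (ξ * ‖v‖ ^ (4 / (2 + γ)))) ∂μ < ⊤ := by
  set α : ℝ := 4 / (2 + γ) with hα_def
  have h2γ : (0:ℝ) < 2 + γ := by linarith
  have hα0 : 0 < α := by positivity
  have hα1 : 1 ≤ α := by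
    rw [hα_def, le_div_iff₀ h2γ]; linarith
  have hCα : 0 < C ^ α := Real.rpow_pos_of_pos hC α
  have hexp : ∀ n : ℕ, 4 * (n:ℝ) / (2 + γ) = α * n := fun n => by
    rw [hα_def]; ring
  have hmom' : ∀ n : ℕ, 3 ≤ n →
      ∫⁻ v, ENNReal.ofReal (‖v‖ ^ (α * (n:ℝ))) ∂μ
        ≤ ENNReal.ofReal (C ^ (α * (n:ℝ)) * (α * (n:ℝ)) ^ ((n : ℝ) - (2 + γ) / 2)) := by
    intro n hn
    have := hmom n hn
    rwa [hexp n] at this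
  set r : ℝ := ξ * (C ^ α * (α * Real.exp 1)) with hr_def
  have he1 : (0:ℝ) < Real.exp 1 := Real.exp_pos 1
  have hr0 : 0 ≤ r := by positivity
  have hr1 : r < 1 := by
    have hkey : (2 + γ) / (4 * Real.exp 1 * C ^ α) * (C ^ α * (α * Real.exp 1)) = 1 := by
      rw [hα_def]; field_simp
    calc r < (2 + γ) / (4 * Real.exp 1 * C ^ α) * (C ^ α * (α * Real.exp 1)) := by
            apply mul_lt_mul_of_pos_right hξ; positivity
      _ = 1 := hkey
  -- pointwise expansion
  have hpt : ∀ v : EuclideanSpace ℝ (Fin 3),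
      ENNReal.ofReal (Real.exp (ξ * ‖v‖ ^ α))
        = ∑' n : ℕ, ENNReal.ofReal (ξ ^ n / n.factorial) * ENNReal.ofReal (‖v‖ ^ (α * (n:ℝ))) := by
    intro v
    have hx : 0 ≤ ‖v‖ := norm_nonneg v
    have hy : 0 ≤ ξ * ‖v‖ ^ α := by positivity
    have hser : Real.exp (ξ * ‖v‖ ^ α) = ∑' n : ℕ, (ξ * ‖v‖ ^ α) ^ n / n.factorial := by
      rw [Real.exp_eq_exp_ℝ, NormedSpace.exp_eq_tsum_div]
    rw [hser, ENNReal.ofReal_tsum_of_nonneg (fun n => by positivity)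
      (Real.summable_pow_div_factorial _)]
    congr 1
    funext n
    rw [← ENNReal.ofReal_mul (by positivity)]
    congr 1
    rw [mul_pow, ← Real.rpow_natCast (‖v‖ ^ α) n, ← Real.rpow_mul hx]
    ring
  -- measurability
  have hmeas : ∀ (c : ℝ), 0 ≤ c → Measurable fun v : EuclideanSpace ℝ (Fin 3) =>
      ENNReal.ofReal (‖v‖ ^ c) := by
    intro c hc
    exact (Continuous.rpow_const continuous_norm
      (fun x => Or.inr hc)).measurable.ennreal_ofReal
  have hswap : ∫⁻ v, ENNReal.ofReal (Real.exp (ξ * ‖v‖ ^ α)) ∂μ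
      = ∑' n : ℕ, ENNReal.ofReal (ξ ^ n / n.factorial)
          * ∫⁻ v, ENNReal.ofReal (‖v‖ ^ (α * (n:ℝ))) ∂μ := by
    rw [lintegral_congr hpt, lintegral_tsum (f := fun (n : ℕ) (v : EuclideanSpace ℝ (Fin 3)) =>
      ENNReal.ofReal (ξ ^ n / n.factorial) * ENNReal.ofReal (‖v‖ ^ (α * (n:ℝ)))) (fun n =>
      (measurable_const.mul (hmeas (α * n) (by positivity))).aemeasurable)]
    congr 1
    funext n
    exact lintegral_const_mul' _ _ ENNReal.ofReal_ne_top
  rw [hswap]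
  set I : ℕ → ENNReal := fun n => ∫⁻ v, ENNReal.ofReal (‖v‖ ^ (α * (n:ℝ))) ∂μ with hI_def
  set f : ℕ → ENNReal := fun n => ENNReal.ofReal (ξ ^ n / n.factorial) * I n with hf_def
  -- I 3 is finite
  have hI3 : I 3 < ⊤ := lt_of_le_of_lt (hmom' 3 le_rfl) ENNReal.ofReal_lt_top
  -- I n bounded for n ≤ 3
  have hIfin : ∀ n : ℕ, n ≤ 3 → I n ≤ 1 + I 3 := by
    intro n hn
    have hpw : ∀ v : EuclideanSpace ℝ (Fin 3),
        ENNReal.ofReal (‖v‖ ^ (α * (n:ℝ)))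
          ≤ 1 + ENNReal.ofReal (‖v‖ ^ (α * ((3:ℕ):ℝ))) := by
      intro v
      have hx : 0 ≤ ‖v‖ := norm_nonneg v
      rcases le_or_gt ‖v‖ 1 with h1 | h1
      · refine le_trans ?_ le_self_add
        rw [← ENNReal.ofReal_one]
        exact ENNReal.ofReal_le_ofReal (Real.rpow_le_one hx h1 (by positivity))
      · refine le_trans ?_ le_add_self
        refine ENNReal.ofReal_le_ofReal (Real.rpow_le_rpow_of_exponent_le h1.le ?_)
        push_cast
        have : (n:ℝ) ≤ 3 := by exact_mod_cast hn
        nlinarith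
    calc I n ≤ ∫⁻ v, (1 + ENNReal.ofReal (‖v‖ ^ (α * ((3:ℕ):ℝ)))) ∂μ :=
          lintegral_mono hpw
      _ = 1 * μ Set.univ + I 3 := by
          rw [lintegral_add_left measurable_const, lintegral_const]
      _ = 1 + I 3 := by rw [measure_univ, mul_one]
  -- tail bound
  have htail : ∀ n : ℕ, 3 ≤ n → f n ≤ ENNReal.ofReal (r ^ n) := by
    intro n hn
    have hfac : (0:ℝ) < n.factorial := by exact_mod_cast n.factorial_pos
    have hn3 : (3:ℝ) ≤ (n:ℝ) := by exact_mod_cast hn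
    have hb : (1:ℝ) ≤ α * n := by nlinarith
    have hreal : ξ ^ n / n.factorial
        * (C ^ (α * (n:ℝ)) * (α * (n:ℝ)) ^ ((n : ℝ) - (2 + γ) / 2)) ≤ r ^ n := by
      have e1 : C ^ (α * (n:ℝ)) = (C ^ α) ^ n := by
        rw [Real.rpow_mul hC.le, Real.rpow_natCast]
      have e2 : (α * (n:ℝ)) ^ ((n : ℝ) - (2 + γ) / 2) ≤ α ^ n * (n:ℝ) ^ n := by
        calc (α * (n:ℝ)) ^ ((n : ℝ) - (2 + γ) / 2)
            ≤ (α * (n:ℝ)) ^ ((n:ℝ)) :=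
              Real.rpow_le_rpow_of_exponent_le hb (by linarith)
          _ = (α * (n:ℝ)) ^ n := Real.rpow_natCast _ n
          _ = α ^ n * (n:ℝ) ^ n := mul_pow _ _ _
      have e3 : (n:ℝ) ^ n ≤ Real.exp 1 ^ n * n.factorial := by
        have hsum : (n:ℝ) ^ n / n.factorial ≤ Real.exp n := by
          refine le_trans ?_ (Real.sum_le_exp_of_nonneg (n.cast_nonneg) (n+1))
          refine Finset.single_le_sum (f := fun i => (n:ℝ) ^ i / i.factorial)
            (fun i _ => by positivity) (Finset.self_mem_range_succ n)
        have hexpn : Real.exp (n:ℝ) = Real.exp 1 ^ n := by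
          rw [← Real.exp_nat_mul, mul_one]
        rw [div_le_iff₀ hfac] at hsum
        calc (n:ℝ) ^ n ≤ Real.exp (n:ℝ) * n.factorial := hsum
          _ = Real.exp 1 ^ n * n.factorial := by rw [hexpn]
      calc ξ ^ n / n.factorial * (C ^ (α * (n:ℝ)) * (α * (n:ℝ)) ^ ((n : ℝ) - (2 + γ) / 2))
          ≤ ξ ^ n / n.factorial * ((C ^ α) ^ n * (α ^ n * (Real.exp 1 ^ n * n.factorial))) := by
            rw [e1]
            gcongr
            exact e2.trans (mul_le_mul_of_nonneg_left e3 (by positivity))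
        _ = r ^ n := by
            have hfeq : ξ ^ n / (n.factorial : ℝ)
                * ((C ^ α) ^ n * (α ^ n * (Real.exp 1 ^ n * n.factorial)))
                = ξ ^ n * ((C ^ α) ^ n * (α ^ n * Real.exp 1 ^ n))
                  * ((n.factorial : ℝ) / n.factorial) := by ring
            rw [hfeq, div_self hfac.ne', mul_one, hr_def, mul_pow, mul_pow, mul_pow]
    calc f n ≤ ENNReal.ofReal (ξ ^ n / n.factorial)
          * ENNReal.ofReal (C ^ (α * (n:ℝ)) * (α * (n:ℝ)) ^ ((n : ℝ) - (2 + γ) / 2)) := by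
          exact mul_le_mul_right (hmom' n hn) _
      _ = ENNReal.ofReal (ξ ^ n / n.factorial
            * (C ^ (α * (n:ℝ)) * (α * (n:ℝ)) ^ ((n : ℝ) - (2 + γ) / 2))) :=
          (ENNReal.ofReal_mul (by positivity)).symm
      _ ≤ ENNReal.ofReal (r ^ n) := ENNReal.ofReal_le_ofReal hreal
  -- termwise bound and conclusion
  have hbound : ∀ n : ℕ,
      f n ≤ ENNReal.ofReal (ξ ^ n / n.factorial) * (1 + I 3) + ENNReal.ofReal (r ^ n) := by
    intro n
    rcases le_or_gt n 3 with h | h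
    · exact le_trans (mul_le_mul_right (hIfin n h) _) le_self_add
    · exact le_trans (htail n h.le) le_add_self
  have hsum1 : (∑' n : ℕ, ENNReal.ofReal (ξ ^ n / n.factorial)) < ⊤ := by
    rw [← ENNReal.ofReal_tsum_of_nonneg (fun n => by positivity)
      (Real.summable_pow_div_factorial ξ)]
    exact ENNReal.ofReal_lt_top
  have hsum2 : (∑' n : ℕ, ENNReal.ofReal (r ^ n)) < ⊤ := by
    have : (∑' n : ℕ, ENNReal.ofReal (r ^ n)) = ∑' n : ℕ, (ENNReal.ofReal r) ^ n := by
      congr 1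
      funext n
      exact (ENNReal.ofReal_pow hr0 n)
    rw [this, ENNReal.tsum_geometric, ENNReal.inv_lt_top, tsub_pos_iff_lt]
    exact ENNReal.ofReal_lt_one.mpr hr1
  calc (∑' n : ℕ, f n)
      ≤ ∑' n : ℕ, (ENNReal.ofReal (ξ ^ n / n.factorial) * (1 + I 3)
          + ENNReal.ofReal (r ^ n)) := ENNReal.tsum_le_tsum hbound
    _ = (∑' n : ℕ, ENNReal.ofReal (ξ ^ n / n.factorial)) * (1 + I 3)
          + ∑' n : ℕ, ENNReal.ofReal (r ^ n) := by
        rw [ENNReal.tsum_add, ENNReal.tsum_mul_right]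
    _ < ⊤ := by
        refine ENNReal.add_lt_top.mpr ⟨ENNReal.mul_lt_top hsum1 ?_, hsum2⟩
        exact ENNReal.add_lt_top.mpr ⟨ENNReal.one_lt_top, hI3⟩
end

section
/- Let γ ∈ (0,1] and define σ : ℝ³ → (3×3 real matrices) by σ(z) = ‖z‖^{1+γ/2}·Π(z) for z ≠ 0 and σ(0) = 0, where Π(z) = Id − (z⊗z)/‖z‖² is the orthogonal projection onto the plane orthogonal to z and ‖·‖ is the Euclidean norm on ℝ³. Then there exists a constant C_σ > 0, depending only on γ, such that for all x, y ∈ ℝ³, ‖σ(x) − σ(y)‖_F ≤ C_σ·‖x − y‖·( ‖x‖^{γ/2} + ‖y‖^{γ/2} ), where ‖·‖_F denotes the Frobenius (Hilbert–Schmidt) norm on 3×3 real matrices. -/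
noncomputable def frobeniusNorm3 (M : Matrix (Fin 3) (Fin 3) ℝ) : ℝ :=
  Real.sqrt (∑ i, ∑ j, (M i j) ^ 2)

namespace DiffAux

noncomputable def emb (M : Matrix (Fin 3) (Fin 3) ℝ) : EuclideanSpace ℝ (Fin 3 × Fin 3) :=
  (WithLp.equiv 2 _).symm (fun p => M p.1 p.2)

lemma emb_apply (M : Matrix (Fin 3) (Fin 3) ℝ) (p : Fin 3 × Fin 3) : emb M p = M p.1 p.2 := rfl

lemma frob_eq (M : Matrix (Fin 3) (Fin 3) ℝ) : frobeniusNorm3 M = ‖emb M‖ := by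
  rw [frobeniusNorm3, EuclideanSpace.norm_eq]
  congr 1
  rw [Fintype.sum_prod_type]
  simp [emb_apply, Real.norm_eq_abs, sq_abs]

lemma emb_sub (A B : Matrix (Fin 3) (Fin 3) ℝ) : emb (A - B) = emb A - emb B := rfl
lemma emb_add (A B : Matrix (Fin 3) (Fin 3) ℝ) : emb (A + B) = emb A + emb B := rfl
lemma emb_smul (c : ℝ) (A : Matrix (Fin 3) (Fin 3) ℝ) : emb (c • A) = c • emb A := rfl

lemma norm_emb_outer (u v : EuclideanSpace ℝ (Fin 3)) :
    ‖emb (Matrix.of fun i j => u i * v j)‖ = ‖u‖ * ‖v‖ := by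
  rw [EuclideanSpace.norm_eq, EuclideanSpace.norm_eq, EuclideanSpace.norm_eq,
    ← Real.sqrt_mul (by positivity)]
  congr 1
  rw [Finset.sum_mul_sum, Fintype.sum_prod_type]
  simp [emb_apply, Real.norm_eq_abs, abs_mul, mul_pow]

lemma norm_emb_one : ‖emb (1 : Matrix (Fin 3) (Fin 3) ℝ)‖ ≤ 2 := by
  rw [EuclideanSpace.norm_eq]
  have h : ∑ p : Fin 3 × Fin 3, ‖emb (1 : Matrix (Fin 3) (Fin 3) ℝ) p‖ ^ 2 = 3 := by
    rw [Fintype.sum_prod_type]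
    simp [emb_apply, Matrix.one_apply, Fin.sum_univ_three]
  rw [h]
  rw [show (2:ℝ) = Real.sqrt 4 by rw [show (4:ℝ) = 2^2 by norm_num, Real.sqrt_sq (by norm_num)]]
  exact Real.sqrt_le_sqrt (by norm_num)

lemma norm_emb_one_sub (u : EuclideanSpace ℝ (Fin 3)) (hu : ‖u‖ = 1) :
    ‖emb ((1 : Matrix (Fin 3) (Fin 3) ℝ) - Matrix.of fun i j => u i * u j)‖ ≤ 3 := by
  rw [emb_sub]
  refine (norm_sub_le _ _).trans ?_
  rw [norm_emb_outer, hu]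
  have := norm_emb_one
  linarith

lemma rpow_mvt {a b p : ℝ} (hb : 0 ≤ b) (hab : b ≤ a) (hp : 1 ≤ p) :
    a ^ p - b ^ p ≤ p * a ^ (p - 1) * (a - b) := by
  have hder : ∀ t ∈ Set.Icc b a,
      HasDerivWithinAt (fun t : ℝ => t ^ p) (p * t ^ (p - 1)) (Set.Icc b a) t :=
    fun t _ => (Real.hasDerivAt_rpow_const (Or.inr hp)).hasDerivWithinAt
  have hbound : ∀ t ∈ Set.Icc b a, ‖p * t ^ (p - 1)‖ ≤ p * a ^ (p - 1) := by
    intro t ht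
    rw [Real.norm_eq_abs, abs_of_nonneg (mul_nonneg (by linarith) (Real.rpow_nonneg (le_trans hb ht.1) _))]
    have : t ^ (p-1) ≤ a ^ (p-1) :=
      Real.rpow_le_rpow (le_trans hb ht.1) ht.2 (by linarith)
    nlinarith [Real.rpow_nonneg (le_trans hb ht.1) (p-1)]
  have := Convex.norm_image_sub_le_of_norm_hasDerivWithin_le hder hbound
    (convex_Icc b a) (Set.left_mem_Icc.mpr hab) (Set.right_mem_Icc.mpr hab)
  rw [Real.norm_eq_abs, Real.norm_eq_abs, abs_of_nonneg (sub_nonneg.mpr hab)] at this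
  exact le_trans (le_abs_self _) this

lemma sigma_eq (γ : ℝ) (σ : EuclideanSpace ℝ (Fin 3) → Matrix (Fin 3) (Fin 3) ℝ)
    (hσ : ∀ z : EuclideanSpace ℝ (Fin 3), z ≠ 0 →
      σ z = ‖z‖ ^ (1 + γ / 2) •
        ((1 : Matrix (Fin 3) (Fin 3) ℝ)
          - (‖z‖ ^ 2)⁻¹ • Matrix.of (fun i j => z i * z j)))
    (z : EuclideanSpace ℝ (Fin 3)) (hz : z ≠ 0) :
    σ z = ‖z‖ ^ (1 + γ / 2) •
      ((1 : Matrix (Fin 3) (Fin 3) ℝ)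
        - Matrix.of fun i j => (‖z‖⁻¹ • z) i * (‖z‖⁻¹ • z) j) := by
  rw [hσ z hz]
  congr 2
  ext i j
  have hz' : ‖z‖ ≠ 0 := norm_ne_zero_iff.mpr hz
  simp only [Matrix.smul_apply, Matrix.of_apply, PiLp.smul_apply, smul_eq_mul]
  rw [sq, mul_inv]
  ring

set_option maxHeartbeats 1000000 in
lemma key (γ : ℝ) (hγ0 : 0 < γ) (hγ1 : γ ≤ 1)
    (σ : EuclideanSpace ℝ (Fin 3) → Matrix (Fin 3) (Fin 3) ℝ)
    (hσ0 : σ 0 = 0)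
    (hσ : ∀ z : EuclideanSpace ℝ (Fin 3), z ≠ 0 →
      σ z = ‖z‖ ^ (1 + γ / 2) •
        ((1 : Matrix (Fin 3) (Fin 3) ℝ)
          - (‖z‖ ^ 2)⁻¹ • Matrix.of (fun i j => z i * z j)))
    (x y : EuclideanSpace ℝ (Fin 3)) (hba : ‖y‖ ≤ ‖x‖) :
    frobeniusNorm3 (σ x - σ y) ≤ 10 * ‖x - y‖ * (‖x‖ ^ (γ / 2) + ‖y‖ ^ (γ / 2)) := by
  have hs0 : (0:ℝ) < γ / 2 := by linarith
  by_cases hx : x = 0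
  · have hy : y = 0 := by
      have : ‖y‖ ≤ 0 := by simpa [hx] using hba
      exact norm_eq_zero.mp (le_antisymm this (norm_nonneg y))
    subst hx; subst hy
    simp [hσ0, frobeniusNorm3]
  have hx0 : (0:ℝ) < ‖x‖ := norm_pos_iff.mpr hx
  by_cases hy : y = 0
  · subst hy
    rw [hσ0, sub_zero, frob_eq, sigma_eq γ σ hσ x hx, emb_smul, norm_smul,
      Real.norm_eq_abs, abs_of_nonneg (Real.rpow_nonneg (norm_nonneg x) _)]
    have hE := norm_emb_one_sub (‖x‖⁻¹ • x) (by
      rw [norm_smul, Real.norm_eq_abs, abs_of_nonneg (inv_nonneg.mpr (norm_nonneg x)),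
        inv_mul_cancel₀ (ne_of_gt hx0)])
    have hsplit : ‖x‖ ^ (1 + γ/2) = ‖x‖ * ‖x‖ ^ (γ/2) := by
      rw [Real.rpow_add hx0, Real.rpow_one]
    have h0 : ‖(0 : EuclideanSpace ℝ (Fin 3))‖ ^ (γ/2) ≥ 0 :=
      Real.rpow_nonneg (norm_nonneg _) _
    have hxs : (0:ℝ) ≤ ‖x‖ ^ (γ/2) := Real.rpow_nonneg (norm_nonneg x) _
    have hEnn : (0:ℝ) ≤ ‖emb ((1 : Matrix (Fin 3) (Fin 3) ℝ)
        - Matrix.of fun i j => (‖x‖⁻¹ • x) i * (‖x‖⁻¹ • x) j)‖ := norm_nonneg _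
    rw [sub_zero, hsplit]
    nlinarith [mul_le_mul_of_nonneg_left hE (mul_nonneg hx0.le hxs),
      mul_nonneg hx0.le h0, mul_nonneg hx0.le hxs]
  have hy0 : (0:ℝ) < ‖y‖ := norm_pos_iff.mpr hy
  set u : EuclideanSpace ℝ (Fin 3) := ‖x‖⁻¹ • x with hudef
  set v : EuclideanSpace ℝ (Fin 3) := ‖y‖⁻¹ • y with hvdef
  have hu : ‖u‖ = 1 := by
    rw [hudef, norm_smul, Real.norm_eq_abs, abs_of_nonneg (inv_nonneg.mpr (norm_nonneg x)),
      inv_mul_cancel₀ (ne_of_gt hx0)]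
  have hv : ‖v‖ = 1 := by
    rw [hvdef, norm_smul, Real.norm_eq_abs, abs_of_nonneg (inv_nonneg.mpr (norm_nonneg y)),
      inv_mul_cancel₀ (ne_of_gt hy0)]
  set Mu : Matrix (Fin 3) (Fin 3) ℝ := Matrix.of fun i j => u i * u j with hMu
  set Mv : Matrix (Fin 3) (Fin 3) ℝ := Matrix.of fun i j => v i * v j with hMv
  have hdecomp : σ x - σ y
      = (‖x‖ ^ (1 + γ/2) - ‖y‖ ^ (1 + γ/2)) • ((1 : Matrix (Fin 3) (Fin 3) ℝ) - Mu)
        + ‖y‖ ^ (1 + γ/2) • (Mv - Mu) := by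
    rw [sigma_eq γ σ hσ x hx, sigma_eq γ σ hσ y hy, ← hudef, ← hvdef, ← hMu, ← hMv]
    module
  -- bound on ‖u - v‖
  have huv : u - v = ‖x‖⁻¹ • (x - y) + (‖x‖⁻¹ - ‖y‖⁻¹) • y := by
    rw [hudef, hvdef]; module
  have hinv : ‖x‖⁻¹ ≤ ‖y‖⁻¹ := by
    exact inv_anti₀ hy0 hba
  have huvb : ‖u - v‖ ≤ 2 * (‖x‖⁻¹ * ‖x - y‖) := by
    have h1 : ‖u - v‖ ≤ ‖‖x‖⁻¹ • (x - y)‖ + ‖(‖x‖⁻¹ - ‖y‖⁻¹) • y‖ := by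
      rw [huv]; exact norm_add_le _ _
    rw [norm_smul, norm_smul, Real.norm_eq_abs, Real.norm_eq_abs,
      abs_of_nonneg (inv_nonneg.mpr (norm_nonneg x)),
      abs_of_nonpos (by linarith), neg_sub] at h1
    have h2 : (‖y‖⁻¹ - ‖x‖⁻¹) * ‖y‖ = (‖x‖ - ‖y‖) * ‖x‖⁻¹ := by
      field_simp
    have h3 : (‖x‖ - ‖y‖) * ‖x‖⁻¹ ≤ ‖x - y‖ * ‖x‖⁻¹ :=
      mul_le_mul_of_nonneg_right (norm_sub_norm_le x y) (inv_nonneg.mpr (norm_nonneg x))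
    rw [h2] at h1
    linarith
  -- bound on ‖emb (Mv - Mu)‖
  have hMsplit : Mv - Mu = Matrix.of (fun i j => (v - u) i * v j)
      + Matrix.of (fun i j => u i * (v - u) j) := by
    ext i j
    simp only [Matrix.sub_apply, Matrix.add_apply, Matrix.of_apply, hMu, hMv, PiLp.sub_apply]
    ring
  have hMvMu : ‖emb (Mv - Mu)‖ ≤ 2 * ‖u - v‖ := by
    rw [hMsplit, emb_add]
    refine (norm_add_le _ _).trans ?_
    rw [norm_emb_outer, norm_emb_outer, hu, hv, norm_sub_rev]
    linarith [norm_nonneg (u - v)]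
  -- rpow facts
  have hrle : ‖y‖ ^ (1 + γ/2) ≤ ‖x‖ ^ (1 + γ/2) :=
    Real.rpow_le_rpow (norm_nonneg y) hba (by linarith)
  have hr1 : ‖x‖ ^ (1 + γ/2) - ‖y‖ ^ (1 + γ/2) ≤ 2 * (‖x‖ ^ (γ/2) * ‖x - y‖) := by
    have h := rpow_mvt (norm_nonneg y) hba (by linarith : (1:ℝ) ≤ 1 + γ/2)
    rw [show (1 + γ/2) - 1 = γ/2 by ring] at h
    have hxy : ‖x‖ - ‖y‖ ≤ ‖x - y‖ := norm_sub_norm_le x y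
    have hxs : (0:ℝ) ≤ ‖x‖ ^ (γ/2) := Real.rpow_nonneg (norm_nonneg x) _
    have hΔ : (0:ℝ) ≤ ‖x‖ - ‖y‖ := sub_nonneg.mpr hba
    have h4 : (1 + γ/2) * (‖x‖ ^ (γ/2) * (‖x‖ - ‖y‖)) ≤ 2 * (‖x‖ ^ (γ/2) * ‖x - y‖) :=
      mul_le_mul (by linarith) (mul_le_mul_of_nonneg_left hxy hxs) (by positivity) (by norm_num)
    nlinarith [h4]
  have hbp : ‖y‖ ^ (1 + γ/2) = ‖y‖ * ‖y‖ ^ (γ/2) := by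
    rw [Real.rpow_add hy0, Real.rpow_one]
  have hba1 : ‖y‖ * ‖x‖⁻¹ ≤ 1 := by
    rw [← div_eq_mul_inv]
    exact (div_le_one hx0).mpr hba
  -- assemble
  have hE1 : ‖emb ((1 : Matrix (Fin 3) (Fin 3) ℝ) - Mu)‖ ≤ 3 := norm_emb_one_sub u hu
  rw [frob_eq, hdecomp, emb_add, emb_smul, emb_smul]
  refine (norm_add_le _ _).trans ?_
  rw [norm_smul, norm_smul, Real.norm_eq_abs, Real.norm_eq_abs,
    abs_of_nonneg (sub_nonneg.mpr hrle),
    abs_of_nonneg (Real.rpow_nonneg (norm_nonneg y) _)]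
  have hA : (‖x‖ ^ (1 + γ/2) - ‖y‖ ^ (1 + γ/2)) * ‖emb ((1 : Matrix (Fin 3) (Fin 3) ℝ) - Mu)‖
      ≤ 2 * (‖x‖ ^ (γ/2) * ‖x - y‖) * 3 :=
    mul_le_mul hr1 hE1 (norm_nonneg _) (by positivity)
  have hB : ‖y‖ ^ (1 + γ/2) * ‖emb (Mv - Mu)‖
      ≤ ‖y‖ ^ (1 + γ/2) * (2 * (2 * (‖x‖⁻¹ * ‖x - y‖))) := by
    refine mul_le_mul_of_nonneg_left ?_ (Real.rpow_nonneg (norm_nonneg y) _)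
    calc ‖emb (Mv - Mu)‖ ≤ 2 * ‖u - v‖ := hMvMu
      _ ≤ 2 * (2 * (‖x‖⁻¹ * ‖x - y‖)) := by linarith
  have hB2 : ‖y‖ ^ (1 + γ/2) * (2 * (2 * (‖x‖⁻¹ * ‖x - y‖)))
      ≤ 4 * (‖y‖ ^ (γ/2) * ‖x - y‖) := by
    rw [hbp]
    have hys : (0:ℝ) ≤ ‖y‖ ^ (γ/2) := Real.rpow_nonneg (norm_nonneg y) _
    nlinarith [mul_le_mul_of_nonneg_right hba1
      (mul_nonneg hys (norm_nonneg (x - y)))]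
  have hxs : (0:ℝ) ≤ ‖x‖ ^ (γ/2) := Real.rpow_nonneg (norm_nonneg x) _
  have hys : (0:ℝ) ≤ ‖y‖ ^ (γ/2) := Real.rpow_nonneg (norm_nonneg y) _
  have hBB := hB.trans hB2
  nlinarith [mul_nonneg hxs (norm_nonneg (x - y)), mul_nonneg hys (norm_nonneg (x - y)), hA, hBB]

end DiffAux

/-- Hölder-type estimate for the diffusion coefficient
`σ(z) = ‖z‖^{1+γ/2} Π(z)` of the Kac particle system with hard potentials,
where `Π(z) = Id - (z ⊗ z)/‖z‖²`. -/
theorem diffusion_coefficient_estimate (γ : ℝ) (hγ0 : 0 < γ) (hγ1 : γ ≤ 1)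
    (σ : EuclideanSpace ℝ (Fin 3) → Matrix (Fin 3) (Fin 3) ℝ)
    (hσ0 : σ 0 = 0)
    (hσ : ∀ z : EuclideanSpace ℝ (Fin 3), z ≠ 0 →
      σ z = ‖z‖ ^ (1 + γ / 2) •
        ((1 : Matrix (Fin 3) (Fin 3) ℝ)
          - (‖z‖ ^ 2)⁻¹ • Matrix.of (fun i j => z i * z j))) :
    ∃ C : ℝ, 0 < C ∧ ∀ x y : EuclideanSpace ℝ (Fin 3),
      frobeniusNorm3 (σ x - σ y) ≤ C * ‖x - y‖ * (‖x‖ ^ (γ / 2) + ‖y‖ ^ (γ / 2)) := by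
  refine ⟨10, by norm_num, fun x y => ?_⟩
  rcases le_total ‖y‖ ‖x‖ with h | h
  · exact DiffAux.key γ hγ0 hγ1 σ hσ0 hσ x y h
  · calc frobeniusNorm3 (σ x - σ y) = frobeniusNorm3 (σ y - σ x) := by
          rw [DiffAux.frob_eq, DiffAux.frob_eq, DiffAux.emb_sub, DiffAux.emb_sub, norm_sub_rev]
    _ ≤ 10 * ‖y - x‖ * (‖y‖ ^ (γ / 2) + ‖x‖ ^ (γ / 2)) :=
          DiffAux.key γ hγ0 hγ1 σ hσ0 hσ y x h
    _ = 10 * ‖x - y‖ * (‖x‖ ^ (γ / 2) + ‖y‖ ^ (γ / 2)) := by rw [norm_sub_rev]; ring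
end

section
/- Let a > 0 and let 1 ≤ m < n be integers, let T > 0 and 0 ≤ t ≤ T. Then F_m^{n−1}(t) ≤ exp( −2n·( (e^{−aT} − m/n)₊ )² ), where x₊ = max(x,0). -/
/-!
With `q = e^{-at}`, the system `F_m' = am (F_{m+1} - F_m)`, `F_m(0) = 0` is solved by the lower
binomial tail `F_m^ℓ(t) = P(Bin(ℓ, q) < m)`: the derivative of that tail in `q` telescopes to a
single binomial term, which is exactly what integrating against `am e^{-am(t-s)}` requires.
For `ℓ = n - 1`, the Chernoff bound with tilt `e^{-λ}` and Hoeffding's lemma for a Bernoulli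
variable, `1 - q + q e^{-λ} ≤ e^{-λq + λ²/8}`, give at `λ = 4 (q - m/n)₊` the bound
`exp(-2n ((q - m/n)₊)²)`; finally `q ≥ e^{-aT}` for `t ≤ T`.
-/

open Real Finset Set MeasureTheory ProbabilityTheory
/-- Auxiliary recursion for `F_m^ℓ`, indexed by the gap `k = ℓ - m`:
`Fgap a 0 m t = a m ∫₀ᵗ e^{-am(t-s)} ds` and
`Fgap a (k+1) m t = a m ∫₀ᵗ e^{-am(t-s)} Fgap a k (m+1) s ds`. -/
noncomputable def Fgap (a : ℝ) : ℕ → ℕ → ℝ → ℝ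
  | 0, m, t => a * (m : ℝ) * ∫ s in (0 : ℝ)..t, Real.exp (-a * (m : ℝ) * (t - s))
  | k + 1, m, t => a * (m : ℝ) *
      ∫ s in (0 : ℝ)..t, Real.exp (-a * (m : ℝ) * (t - s)) * Fgap a k (m + 1) s

/-- `F_m^ℓ(t)`: for `m ≤ ℓ`,
`F_ℓ^ℓ(t) = aℓ ∫₀ᵗ e^{-aℓ(t-s)} ds` and
`F_m^ℓ(t) = am ∫₀ᵗ e^{-am(t-s)} F_{m+1}^ℓ(s) ds`. -/
noncomputable def Fhier (a : ℝ) (m ℓ : ℕ) (t : ℝ) : ℝ := Fgap a (ℓ - m) m t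

noncomputable def binomLowerTail (N m : ℕ) (q : ℝ) : ℝ :=
  ∑ j ∈ range m, (N.choose j : ℝ) * q ^ j * (1 - q) ^ (N - j)

lemma binomLowerTail_succ_self (N : ℕ) (q : ℝ) : binomLowerTail N (N + 1) q = 1 := by
  have h := add_pow q (1 - q) N
  rw [add_sub_cancel, one_pow] at h
  exact (sum_congr rfl fun j _ => by ring).trans h.symm

lemma binomLowerTail_one_right {N m : ℕ} (hm : m ≤ N) : binomLowerTail N m 1 = 0 :=
  sum_eq_zero fun j hj => by
    simp [Nat.sub_ne_zero_of_lt ((mem_range.mp hj).trans_le hm)]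

lemma hasDerivAt_binomLowerTail (N m : ℕ) (q : ℝ) :
    HasDerivAt (binomLowerTail N m)
      (-(m * N.choose m * q ^ (m - 1) * (1 - q) ^ (N - m))) q := by
  set g : ℕ → ℝ := fun j => j * N.choose j * q ^ (j - 1) * (1 - q) ^ (N - j)
  have hterm (j : ℕ) : HasDerivAt (fun q : ℝ => (N.choose j : ℝ) * q ^ j * (1 - q) ^ (N - j))
      (g j - g (j + 1)) q := by
    have hchoose : ((j + 1 : ℕ) : ℝ) * N.choose (j + 1) = N.choose j * (N - j : ℕ) := by
      rw [mul_comm]; exact_mod_cast Nat.choose_succ_right_eq N j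
    refine (((hasDerivAt_pow j q).const_mul (N.choose j : ℝ)).fun_mul
      (((hasDerivAt_id q).const_sub 1).fun_pow (N - j))).congr_deriv ?_
    simp only [g, hchoose, Nat.add_sub_cancel, Nat.sub_sub, id]
    ring
  have := HasDerivAt.fun_sum (u := range m) (fun j _ => hterm j)
  rw [sum_range_sub'] at this
  simp only [g, CharP.cast_eq_zero, zero_mul, zero_sub] at this
  exact this

lemma continuous_binomLowerTail (N m : ℕ) : Continuous (binomLowerTail N m) :=
  continuous_iff_continuousAt.2 fun q => (hasDerivAt_binomLowerTail N m q).continuousAt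

lemma hasDerivAt_exp_mul_binomLowerTail (a : ℝ) (M m : ℕ) (s : ℝ) :
    HasDerivAt (fun s => exp (a * m * s) * binomLowerTail M m (exp (-a * s)))
      (a * m * exp (a * m * s) * binomLowerTail M (m + 1) (exp (-a * s))) s := by
  have hq : HasDerivAt (fun s => exp (-a * s)) (exp (-a * s) * -a) s := by
    simpa using ((hasDerivAt_id s).const_mul (-a)).exp
  have he : HasDerivAt (fun s => exp (a * m * s)) (exp (a * m * s) * (a * m)) s := by
    simpa using ((hasDerivAt_id s).const_mul (a * m)).exp
  refine (he.mul ((hasDerivAt_binomLowerTail M m _).comp s hq)).congr_deriv ?_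
  rw [binomLowerTail, sum_range_succ, ← binomLowerTail]
  obtain _ | m := m
  · simp
  · simp only [Function.comp_apply, Nat.add_sub_cancel, pow_succ]; push_cast; ring

lemma integral_exp_mul_binomLowerTail_succ (a t : ℝ) {M m : ℕ} (hm : m ≤ M) :
    a * m * ∫ s in (0 : ℝ)..t, exp (-a * m * (t - s)) * binomLowerTail M (m + 1) (exp (-a * s))
      = binomLowerTail M m (exp (-a * t)) := by
  have hcont := continuous_binomLowerTail M (m + 1)
  have hFTC := intervalIntegral.integral_eq_sub_of_hasDerivAt
    (fun s _ => hasDerivAt_exp_mul_binomLowerTail a M m s)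
    ((by fun_prop : Continuous _).intervalIntegrable 0 t)
  have hintegrand (s : ℝ) :
      a * m * (exp (-a * m * (t - s)) * binomLowerTail M (m + 1) (exp (-a * s)))
        = exp (-(a * m * t)) *
          (a * m * exp (a * m * s) * binomLowerTail M (m + 1) (exp (-a * s))) := by
    rw [show -a * m * (t - s) = -(a * m * t) + a * m * s by ring, exp_add]; ring
  rw [← intervalIntegral.integral_const_mul]
  simp only [hintegrand, intervalIntegral.integral_const_mul, hFTC, mul_zero, exp_zero,
    binomLowerTail_one_right hm]
  rw [sub_zero, ← mul_assoc, ← exp_add, neg_add_cancel, exp_zero, one_mul]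

lemma Fgap_eq_binomLowerTail (a : ℝ) (k m : ℕ) (t : ℝ) :
    Fgap a k m t = binomLowerTail (m + k) m (exp (-a * t)) := by
  induction k generalizing m t with
  | zero =>
    rw [Nat.add_zero, ← integral_exp_mul_binomLowerTail_succ a t le_rfl]
    simp [Fgap, binomLowerTail_succ_self]
  | succ k ih =>
    rw [← integral_exp_mul_binomLowerTail_succ a t (Nat.le_add_right m (k + 1)), Fgap]
    simp only [ih, add_right_comm m 1 k, add_assoc]

lemma Fhier_eq_binomLowerTail (a : ℝ) {m ℓ : ℕ} (h : m ≤ ℓ) (t : ℝ) :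
    Fhier a m ℓ t = binomLowerTail ℓ m (exp (-a * t)) := by
  rw [Fhier, Fgap_eq_binomLowerTail, Nat.add_sub_cancel' h]

lemma one_sub_add_mul_exp_le (p : ℝ) (hp : p ∈ Icc (0 : ℝ) 1) (t : ℝ) :
    1 - p + p * exp t ≤ exp (p * t + t ^ 2 / 8) := by
  let X : Bool → ℝ := fun b => if b then 1 else 0
  have hoeffding := (hasSubgaussianMGF_of_mem_Icc (X := X)
    (μ := bernoulliMeasure true false ⟨p, hp⟩) (a := 0) (b := 1) (by fun_prop)
    (ae_of_all _ fun b => by cases b <;> simp [X])).mgf_le t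
  norm_num [mgf, X, integral_bernoulliMeasure] at hoeffding
  have hcancel : exp (p * t) * exp (-(t * p)) = 1 := by rw [← exp_add]; ring_nf; exact exp_zero
  calc 1 - p + p * exp t
      = exp (p * t) * (p * exp (t * (1 - p)) + (1 - p) * exp (-(t * p))) := by
        rw [show t * (1 - p) = t + -(t * p) by ring, exp_add]
        linear_combination (-(p * exp t + 1 - p)) * hcancel
    _ ≤ exp (p * t) * exp (t ^ 2 / 8) := by
        gcongr
        exact hoeffding.trans_eq (by ring_nf)
    _ = exp (p * t + t ^ 2 / 8) := (exp_add _ _).symm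

lemma binomLowerTail_le_exp_mul_pow {N m : ℕ} (hm : m ≤ N + 1) {q : ℝ}
    (hq : q ∈ Icc (0 : ℝ) 1) {l : ℝ} (hl : 0 ≤ l) :
    binomLowerTail N m q ≤ exp (l * (m - 1)) * (1 - q + q * exp (-l)) ^ N := by
  have hq0 : 0 ≤ q := hq.1
  have h1q : 0 ≤ 1 - q := sub_nonneg.2 hq.2
  have hterm (j : ℕ) (hj : j ∈ range m) : (N.choose j : ℝ) * q ^ j * (1 - q) ^ (N - j)
      ≤ exp (l * (m - 1)) * ((N.choose j : ℝ) * (q * exp (-l)) ^ j * (1 - q) ^ (N - j)) := by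
    have hjm : (j : ℝ) + 1 ≤ m := by exact_mod_cast mem_range.1 hj
    have hweight : exp (l * (m - 1)) * exp (-l) ^ j = exp (l * (m - 1 - j)) := by
      rw [← exp_nat_mul, ← exp_add]; ring_nf
    calc (N.choose j : ℝ) * q ^ j * (1 - q) ^ (N - j)
        ≤ exp (l * (m - 1 - j)) * ((N.choose j : ℝ) * q ^ j * (1 - q) ^ (N - j)) :=
          le_mul_of_one_le_left (by positivity)
            (one_le_exp (mul_nonneg hl (by linarith)))
      _ = _ := by rw [← hweight]; ring
  calc binomLowerTail N m q
      ≤ exp (l * (m - 1)) *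
          ∑ j ∈ range m, (N.choose j : ℝ) * (q * exp (-l)) ^ j * (1 - q) ^ (N - j) := by
        rw [mul_sum]; exact sum_le_sum hterm
    _ ≤ exp (l * (m - 1)) *
          ∑ j ∈ range (N + 1), (N.choose j : ℝ) * (q * exp (-l)) ^ j * (1 - q) ^ (N - j) := by
        gcongr
    _ = exp (l * (m - 1)) * (1 - q + q * exp (-l)) ^ N := by
        rw [add_comm (1 - q), add_pow]
        exact congrArg _ (sum_congr rfl fun j _ => by ring)

lemma binomLowerTail_le_exp_sq {m n : ℕ} (hmn : m < n) {q : ℝ} (hq : q ∈ Icc (0 : ℝ) 1) :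
    binomLowerTail (n - 1) m q ≤ exp (-2 * n * max (q - m / n) 0 ^ 2) := by
  set d := max (q - m / n) 0
  have hd : 0 ≤ d := le_max_right _ _
  have hn : ((n - 1 : ℕ) : ℝ) = n - 1 := by rw [Nat.cast_pred (by omega)]
  calc binomLowerTail (n - 1) m q
      ≤ exp (4 * d * (m - 1)) * (1 - q + q * exp (-(4 * d))) ^ (n - 1) :=
        binomLowerTail_le_exp_mul_pow (by omega) hq (by positivity)
    _ ≤ exp (4 * d * (m - 1)) * exp (q * -(4 * d) + (-(4 * d)) ^ 2 / 8) ^ (n - 1) := by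
        gcongr
        · have := hq.1; have := hq.2; positivity
        · exact one_sub_add_mul_exp_le q hq _
    _ = exp (4 * d * (m - 1) + (n - 1) * (q * -(4 * d) + (-(4 * d)) ^ 2 / 8)) := by
        rw [← exp_nat_mul, ← exp_add, hn]
    _ ≤ exp (-2 * n * d ^ 2) := by
        have hn0 : (0 : ℝ) < n := by exact_mod_cast (Nat.zero_le m).trans_lt hmn
        have hm_eq : (m : ℝ) = n * (m / n) := by field_simp
        rw [exp_le_exp]
        rcases max_cases (q - m / n) 0 with ⟨hdq, -⟩ | ⟨hd0, -⟩
        · rw [show d = q - m / n from hdq] at hd ⊢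
          nlinarith [mul_nonneg hd (sub_nonneg.2 hq.2)]
        · rw [show d = 0 from hd0]; simp

theorem Fhier_le_exp_bound_general (a : ℝ) (ha : 0 < a) (m n : ℕ) (hmn : m < n)
    (T t : ℝ) (ht0 : 0 ≤ t) (htT : t ≤ T) :
    Fhier a m (n - 1) t
      ≤ Real.exp (-2 * (n : ℝ) *
          (max (Real.exp (-a * T) - (m : ℝ) / (n : ℝ)) 0) ^ 2) := by
  have hq : exp (-a * t) ∈ Icc (0 : ℝ) 1 :=
    ⟨(exp_pos _).le, exp_le_one_iff.2 (by nlinarith)⟩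
  have hmax : max (exp (-a * T) - m / n) 0 ≤ max (exp (-a * t) - m / n) 0 :=
    max_le_max (sub_le_sub_right (exp_le_exp.2 (by nlinarith)) _) le_rfl
  rw [Fhier_eq_binomLowerTail a (by omega) t]
  refine (binomLowerTail_le_exp_sq hmn hq).trans (exp_le_exp.2 ?_)
  have := pow_le_pow_left₀ (le_max_right _ _) hmax 2
  nlinarith [(n.cast_nonneg : (0 : ℝ) ≤ n)]

/-- Combinatorial bound `F_m^{n-1}(t) ≤ exp(-2n((e^{-aT} - m/n)₊)²)`
(Lemma 4.8/Proposition 5.1 of Lacker 2023, as used in the paper). -/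
theorem Fhier_le_exp_bound (a : ℝ) (ha : 0 < a) (m n : ℕ) (hm : 1 ≤ m) (hmn : m < n)
    (T t : ℝ) (hT : 0 < T) (ht0 : 0 ≤ t) (htT : t ≤ T) :
    Fhier a m (n - 1) t
      ≤ Real.exp (-2 * (n : ℝ) *
          (max (Real.exp (-a * T) - (m : ℝ) / (n : ℝ)) 0) ^ 2) :=
  Fhier_le_exp_bound_general a ha m n hmn T t ht0 htT
end

section
/- Let a > 0, t ≥ 0 and integers 1 ≤ m ≤ ℓ. Then: (i) F̃_m^ℓ(t) ≤ e^{a t}·F_m^ℓ(t); and (ii) G̃_m^ℓ(t) = e^{a t}·G_m^ℓ(t). -/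
/-- Auxiliary recursion for `F̃_m^ℓ` (exponent `j-1` in place of `j`). -/
noncomputable def Ftgap (a : ℝ) : ℕ → ℕ → ℝ → ℝ
  | 0, m, t => a * (m : ℝ) *
      ∫ s in (0 : ℝ)..t, Real.exp (-a * ((m : ℝ) - 1) * (t - s))
  | k + 1, m, t => a * (m : ℝ) *
      ∫ s in (0 : ℝ)..t, Real.exp (-a * ((m : ℝ) - 1) * (t - s)) * Ftgap a k (m + 1) s

/-- `F̃_m^ℓ(t)` for `m ≤ ℓ`, the iterated integral
`(∏_{j=m}^{ℓ} aj) ∫…∫ exp(-a ∑_{j=m}^{ℓ} (j-1)(t_j - t_{j+1})) dt_{ℓ+1} ⋯ dt_{m+1}`. -/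
noncomputable def Fthier (a : ℝ) (m ℓ : ℕ) (t : ℝ) : ℝ := Ftgap a (ℓ - m) m t

/-- Auxiliary recursion for `G_m^ℓ`. -/
noncomputable def Ggap (a : ℝ) : ℕ → ℕ → ℝ → ℝ
  | 0, m, t => Real.exp (-a * (m : ℝ) * t)
  | k + 1, m, t => a * (m : ℝ) *
      ∫ s in (0 : ℝ)..t, Real.exp (-a * (m : ℝ) * (t - s)) * Ggap a k (m + 1) s

/-- `G_m^ℓ(t)` for `m ≤ ℓ`, with `G_m^m(t) = e^{-amt}`. -/
noncomputable def Ghier (a : ℝ) (m ℓ : ℕ) (t : ℝ) : ℝ := Ggap a (ℓ - m) m t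

/-- Auxiliary recursion for `G̃_m^ℓ` (exponent `j-1` in place of `j`). -/
noncomputable def Gtgap (a : ℝ) : ℕ → ℕ → ℝ → ℝ
  | 0, m, t => Real.exp (-a * ((m : ℝ) - 1) * t)
  | k + 1, m, t => a * (m : ℝ) *
      ∫ s in (0 : ℝ)..t, Real.exp (-a * ((m : ℝ) - 1) * (t - s)) * Gtgap a k (m + 1) s

/-- `G̃_m^ℓ(t)` for `m ≤ ℓ`, with `G̃_m^m(t) = e^{-a(m-1)t}`. -/
noncomputable def Gthier (a : ℝ) (m ℓ : ℕ) (t : ℝ) : ℝ := Gtgap a (ℓ - m) m t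

section Aux

open intervalIntegral Real

private lemma primitive_cont (c : ℝ) {f : ℝ → ℝ} (hf : Continuous f) :
    Continuous fun t => ∫ s in (0:ℝ)..t, Real.exp (c * (t - s)) * f s := by
  have h : ∀ t : ℝ, (∫ s in (0:ℝ)..t, Real.exp (c * (t - s)) * f s)
      = Real.exp (c * t) * ∫ s in (0:ℝ)..t, Real.exp (-c * s) * f s := by
    intro t
    rw [← intervalIntegral.integral_const_mul]
    apply intervalIntegral.integral_congr
    intro s _
    show Real.exp (c * (t - s)) * f s = Real.exp (c * t) * (Real.exp (-c * s) * f s)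
    have e1 : Real.exp (c * t) * Real.exp (-c * s) = Real.exp (c * (t - s)) := by
      rw [← Real.exp_add]; congr 1; ring
    linear_combination -f s * e1
  simp only [h]
  have hc : Continuous fun s : ℝ => Real.exp (-c * s) * f s :=
    (Real.continuous_exp.comp (continuous_const.mul continuous_id)).mul hf
  exact (Real.continuous_exp.comp (continuous_const.mul continuous_id)).mul
    (intervalIntegral.continuous_primitive (fun a b => hc.intervalIntegrable a b) 0)

private lemma gap_cont (a : ℝ) : ∀ k m, Continuous (Fgap a k m) ∧ Continuous (Ftgap a k m) := by
  intro k
  induction k with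
  | zero =>
    intro m
    constructor
    · have : (Fgap a 0 m) = fun t => (a * m) *
          ∫ s in (0:ℝ)..t, Real.exp ((-a * m) * (t - s)) * (fun _ : ℝ => (1:ℝ)) s := by
        funext t; simp [Fgap]
      rw [this]
      exact continuous_const.mul (primitive_cont _ continuous_const)
    · have : (Ftgap a 0 m) = fun t => (a * m) *
          ∫ s in (0:ℝ)..t, Real.exp ((-a * ((m:ℝ) - 1)) * (t - s)) * (fun _ : ℝ => (1:ℝ)) s := by
        funext t; simp [Ftgap]
      rw [this]
      exact continuous_const.mul (primitive_cont _ continuous_const)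
  | succ k ih =>
    intro m
    constructor
    · have : (Fgap a (k+1) m) = fun t => (a * m) *
          ∫ s in (0:ℝ)..t, Real.exp ((-a * m) * (t - s)) * Fgap a k (m+1) s := by
        funext t; simp [Fgap]
      rw [this]
      exact continuous_const.mul (primitive_cont _ (ih (m+1)).1)
    · have : (Ftgap a (k+1) m) = fun t => (a * m) *
          ∫ s in (0:ℝ)..t, Real.exp ((-a * ((m:ℝ) - 1)) * (t - s)) * Ftgap a k (m+1) s := by
        funext t; simp [Ftgap]
      rw [this]
      exact continuous_const.mul (primitive_cont _ (ih (m+1)).2)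

private lemma Fgap_nonneg (a : ℝ) (ha : 0 ≤ a) :
    ∀ k m (t : ℝ), 0 ≤ t → 0 ≤ Fgap a k m t := by
  intro k
  induction k with
  | zero =>
    intro m t ht
    have : 0 ≤ ∫ s in (0:ℝ)..t, Real.exp (-a * m * (t - s)) :=
      intervalIntegral.integral_nonneg ht fun s _ => (Real.exp_pos _).le
    simpa [Fgap] using mul_nonneg (mul_nonneg ha (Nat.cast_nonneg m)) this
  | succ k ih =>
    intro m t ht
    have : 0 ≤ ∫ s in (0:ℝ)..t, Real.exp (-a * m * (t - s)) * Fgap a k (m+1) s :=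
      intervalIntegral.integral_nonneg ht fun s hs =>
        mul_nonneg (Real.exp_pos _).le (ih (m+1) s hs.1)
    simpa [Fgap] using mul_nonneg (mul_nonneg ha (Nat.cast_nonneg m)) this

private lemma F_key (a : ℝ) (ha : 0 < a) :
    ∀ k m (t : ℝ), 0 ≤ t → Ftgap a k m t ≤ Real.exp (a * t) * Fgap a k m t := by
  intro k
  induction k with
  | zero =>
    intro m t ht
    have hle : (∫ s in (0:ℝ)..t, Real.exp (-a * ((m:ℝ) - 1) * (t - s)))
        ≤ ∫ s in (0:ℝ)..t, Real.exp (a * t) * Real.exp (-a * m * (t - s)) := by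
      apply intervalIntegral.integral_mono_on ht
      · exact (Real.continuous_exp.comp (by continuity)).intervalIntegrable 0 t
      · exact (continuous_const.mul (Real.continuous_exp.comp (by continuity))).intervalIntegrable 0 t
      · intro s hs
        rw [← Real.exp_add]
        apply Real.exp_le_exp.2
        nlinarith [hs.1]
    have := mul_le_mul_of_nonneg_left hle
      (mul_nonneg ha.le (Nat.cast_nonneg m) : (0:ℝ) ≤ a * m)
    simp only [Ftgap, Fgap, intervalIntegral.integral_const_mul] at *
    nlinarith [this]
  | succ k ih =>
    intro m t ht
    have hle : (∫ s in (0:ℝ)..t, Real.exp (-a * ((m:ℝ) - 1) * (t - s)) * Ftgap a k (m+1) s)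
        ≤ ∫ s in (0:ℝ)..t, Real.exp (a * t) *
            (Real.exp (-a * m * (t - s)) * Fgap a k (m+1) s) := by
      apply intervalIntegral.integral_mono_on ht
      · exact ((Real.continuous_exp.comp (by continuity)).mul
          (gap_cont a k (m+1)).2).intervalIntegrable 0 t
      · exact (continuous_const.mul ((Real.continuous_exp.comp (by continuity)).mul
          (gap_cont a k (m+1)).1)).intervalIntegrable 0 t
      · intro s hs
        calc Real.exp (-a * ((m:ℝ) - 1) * (t - s)) * Ftgap a k (m+1) s
            ≤ Real.exp (-a * ((m:ℝ) - 1) * (t - s)) *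
              (Real.exp (a * s) * Fgap a k (m+1) s) :=
              mul_le_mul_of_nonneg_left (ih (m+1) s hs.1) (Real.exp_pos _).le
          _ = Real.exp (a * t) * (Real.exp (-a * m * (t - s)) * Fgap a k (m+1) s) := by
              rw [← mul_assoc, ← Real.exp_add, ← mul_assoc, ← Real.exp_add]
              ring_nf
    have := mul_le_mul_of_nonneg_left hle
      (mul_nonneg ha.le (Nat.cast_nonneg m) : (0:ℝ) ≤ a * m)
    simp only [Ftgap, Fgap, intervalIntegral.integral_const_mul] at *
    nlinarith [this]

private lemma G_key (a : ℝ) :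
    ∀ k m (t : ℝ), Gtgap a k m t = Real.exp (a * t) * Ggap a k m t := by
  intro k
  induction k with
  | zero =>
    intro m t
    simp only [Gtgap, Ggap, ← Real.exp_add]
    ring_nf
  | succ k ih =>
    intro m t
    simp only [Gtgap, Ggap]
    have h : (∫ s in (0:ℝ)..t, Real.exp (-a * ((m:ℝ) - 1) * (t - s)) * Gtgap a k (m+1) s)
        = Real.exp (a * t) * ∫ s in (0:ℝ)..t,
            Real.exp (-a * (m:ℝ) * (t - s)) * Ggap a k (m+1) s := by
      rw [← intervalIntegral.integral_const_mul]
      apply intervalIntegral.integral_congr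
      intro s _
      show Real.exp (-a * ((m:ℝ) - 1) * (t - s)) * Gtgap a k (m+1) s
          = Real.exp (a * t) * (Real.exp (-a * (m:ℝ) * (t - s)) * Ggap a k (m+1) s)
      rw [ih (m+1) s]
      have e1 : Real.exp (-a * ((m:ℝ) - 1) * (t - s)) * Real.exp (a * s)
          = Real.exp (a * t) * Real.exp (-a * (m:ℝ) * (t - s)) := by
        rw [← Real.exp_add, ← Real.exp_add]; congr 1; ring
      linear_combination Ggap a k (m+1) s * e1
    rw [h]; ring

end Aux

/-- Comparison of the tilded and untilded iterated integrals:
`F̃_m^ℓ(t) ≤ e^{at} F_m^ℓ(t)` and `G̃_m^ℓ(t) = e^{at} G_m^ℓ(t)`. -/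
theorem tilde_compare (a : ℝ) (ha : 0 < a) (m ℓ : ℕ) (hm : 1 ≤ m) (hml : m ≤ ℓ)
    (t : ℝ) (ht : 0 ≤ t) :
    Fthier a m ℓ t ≤ Real.exp (a * t) * Fhier a m ℓ t ∧
      Gthier a m ℓ t = Real.exp (a * t) * Ghier a m ℓ t := by
  exact ⟨F_key a ha (ℓ - m) m t ht, G_key a (ℓ - m) m t⟩
end
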